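/- arXiv:1905.00105 — 7 statements merged into one kernel-verified Lean document; each statement's English description precedes it below -/
import Mathlib

section
/- (Dubins–Freedman, part a) Let (ℱ_n)_{n≥0} be a filtration and A_n ∈ ℱ_n events with q_n = P(A_n | ℱ_{n-1}). Then almost surely on the event {∑_{i=1}^∞ q_i < ∞} it holds that ∑_{i=1}^∞ 1_{A_i} < ∞. -/
open MeasureTheory Filter

/-- Dubins–Freedman, part a: For a filtration `(ℱ_n)` and events
`A_n ∈ ℱ_n` with `q_n = P(A_n | ℱ_{n-1})`, almost surely on `{∑ q_n < ∞}` only finitely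
many of the `A_n` occur. (Events are indexed so that `A n ∈ ℱ (n+1)` and
`q n = μ[1_{A n} | ℱ n]`.) -/
theorem dubins_freedman_summable {Ω : Type*} {m0 : MeasurableSpace Ω}
    (μ : Measure Ω) [IsProbabilityMeasure μ] (ℱ : Filtration ℕ m0)
    (A : ℕ → Set Ω) (hA : ∀ n, MeasurableSet[ℱ (n + 1)] (A n)) :
    ∀ᵐ ω ∂μ,
      (Summable fun n => (μ[(A n).indicator (fun _ => (1 : ℝ)) | ℱ n]) ω) →
        {n | ω ∈ A n}.Finite := by
  set s : ℕ → Set Ω := fun n => Nat.rec ∅ (fun k _ => A k) n with hs_def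
  have hs : ∀ n, MeasurableSet[ℱ n] (s n) := by
    rintro (_ | n)
    · exact @MeasurableSet.empty _ (ℱ 0)
    · exact hA n
  filter_upwards [MeasureTheory.ae_mem_limsup_atTop_iff μ hs] with ω hω hsum
  have hA1 : ∀ n, (A n).indicator (fun _ => (1 : ℝ)) = (A n).indicator (1 : Ω → ℝ) := by
    intro n; rfl
  have hnot : ¬ Tendsto (fun n => ∑ k ∈ Finset.range n,
      (μ[(s (k + 1)).indicator (1 : Ω → ℝ)|ℱ k]) ω) atTop atTop := by
    have hconv := hsum.hasSum.tendsto_sum_nat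
    simp only [hA1] at hconv
    intro h
    exact not_tendsto_atTop_of_tendsto_nhds hconv h
  have hω' : ω ∉ limsup s atTop := fun h => hnot ((hω).1 h)
  rw [mem_limsup_iff_frequently_mem, not_frequently] at hω'
  have : ∀ᶠ n in atTop, ω ∉ A n := by
    rw [eventually_atTop] at hω' ⊢
    obtain ⟨N, hN⟩ := hω'
    exact ⟨N, fun n hn => hN (n + 1) (le_trans hn (Nat.le_succ n))⟩
  rw [eventually_atTop] at this
  obtain ⟨N, hN⟩ := this
  exact Set.Finite.subset (Set.finite_Iio N) fun n hn => by
    by_contra h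
    exact hN n (not_lt.1 h) hn
end

section
/- (Dubins–Freedman, part b) Let (ℱ_n)_{n≥0} be a filtration and A_n ∈ ℱ_n events with q_n = P(A_n | ℱ_{n-1}). Then almost surely on the event {∑_{i=1}^∞ q_i = ∞}, the ratio (∑_{i=1}^n 1_{A_i}) / (∑_{i=1}^n q_i) converges to 1 as n → ∞. -/
/-!
Let `B n = 1 + ∑_{i<n} q i`, so that `B (i + 1)` is `ℱ i`-measurable, and
`M n = ∑_{i<n} (1_{A i} - q i) / B (i + 1)`, a martingale with increments bounded by `1`.
Since `(x - p)² ≤ (x - p) + 2p` on `[0, 1]` and `p / (b + p)² ≤ 1 / b - 1 / (b + p)`, the step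
of `M n ^ 2 + 2 / B n` is bounded by a martingale difference, so its expectation never exceeds its
initial value `2`. Thus `M` is bounded in `L²`, hence in `L¹`, and converges almost surely.
Kronecker's lemma turns this into `∑_{i<n} (1_{A i} - q i) = o(B n)`, which on `{B n → ∞}` says
that the ratio tends to `1`. The conditional probabilities are replaced by a version clamped to
`[0, 1]`, so that all these bounds hold pointwise.
-/

open MeasureTheory Filter Topology Asymptotics Finset
open scoped NNReal ENNReal

theorem isLittleO_sum_of_tendsto_sum_div {a b : ℕ → ℝ} (hb_pos : ∀ n, 0 < b n)
    (hb_mono : Monotone b) (hb_top : Tendsto b atTop atTop) {c : ℝ}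
    (h : Tendsto (fun n => ∑ i ∈ range n, a i / b (i + 1)) atTop (𝓝 c)) :
    (fun n => ∑ i ∈ range n, a i) =o[atTop] b := by
  set D : ℕ → ℝ := fun n => ∑ i ∈ range n, a i / b (i + 1) - c
  have hD : Tendsto D atTop (𝓝 0) := by simpa [D] using h.sub_const c
  have abel (n : ℕ) : ∑ i ∈ range n, a i
      = b n * D n - b 0 * D 0 - ∑ i ∈ range n, (b (i + 1) - b i) * D i := by
    induction n with
    | zero => simp
    | succ n ih =>
      have hD_succ : D (n + 1) = D n + a n / b (n + 1) := by
        simp only [D, sum_range_succ]; ring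
      rw [sum_range_succ, ih, sum_range_succ, hD_succ, mul_add,
        mul_div_cancel₀ _ (hb_pos _).ne']
      ring
  have hconst (k : ℝ) : (fun _ => k) =o[atTop] b :=
    isLittleO_const_left.2 (Or.inr (tendsto_norm_atTop_atTop.comp hb_top))
  have hD_weighted : (fun n => b n * D n) =o[atTop] b := by
    simpa using (isBigO_refl b atTop).mul_isLittleO ((isLittleO_one_iff ℝ).2 hD)
  -- Toeplitz: an average of `D` with weights `b (i + 1) - b i` summing to `b n - b 0` is `o(b n)`.
  have hgap : (fun n => ∑ i ∈ range n, (b (i + 1) - b i) * D i) =o[atTop] b := by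
    have hsum := IsLittleO.sum_range (f := fun i => (b (i + 1) - b i) * D i)
      (g := fun i => b (i + 1) - b i) ?_ (fun i => sub_nonneg.2 (hb_mono i.le_succ)) ?_
    · refine hsum.trans_isBigO ?_
      simp only [sum_range_sub]
      exact (isBigO_refl b atTop).sub (hconst _).isBigO
    · simpa using (isBigO_refl _ atTop).mul_isLittleO ((isLittleO_one_iff ℝ).2 hD)
    · exact (tendsto_atTop_add_const_right _ (-b 0) hb_top).congr fun n => by
        rw [sum_range_sub, sub_eq_add_neg]
  simp_rw [abel]
  exact (hD_weighted.sub (hconst _)).sub hgap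

namespace DubinsFreedman

variable {Ω : Type*}

noncomputable def scale (q : ℕ → Ω → ℝ) (n : ℕ) (ω : Ω) : ℝ := 1 + ∑ i ∈ range n, q i ω

noncomputable def increment (X q : ℕ → Ω → ℝ) (n : ℕ) (ω : Ω) : ℝ :=
  (X n ω - q n ω) / scale q (n + 1) ω

noncomputable def normalizedSum (X q : ℕ → Ω → ℝ) (n : ℕ) (ω : Ω) : ℝ :=
  ∑ i ∈ range n, increment X q i ω

noncomputable def energy (X q : ℕ → Ω → ℝ) (n : ℕ) (ω : Ω) : ℝ :=
  normalizedSum X q n ω ^ 2 + 2 * (scale q n ω)⁻¹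

variable {X q : ℕ → Ω → ℝ}

lemma scale_succ (n : ℕ) (ω : Ω) : scale q (n + 1) ω = scale q n ω + q n ω := by
  simp only [scale, sum_range_succ]; ring

lemma one_le_scale (hq : ∀ n ω, 0 ≤ q n ω) (n : ℕ) (ω : Ω) : 1 ≤ scale q n ω :=
  le_add_of_nonneg_right (sum_nonneg fun i _ => hq i ω)

lemma monotone_scale (hq : ∀ n ω, 0 ≤ q n ω) (ω : Ω) : Monotone (scale q · ω) :=
  monotone_nat_of_le_succ fun n => by rw [scale_succ]; linarith [hq n ω]

lemma inv_scale_mem_Icc (hq : ∀ n ω, 0 ≤ q n ω) (n : ℕ) (ω : Ω) :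
    (scale q n ω)⁻¹ ∈ Set.Icc (0 : ℝ) 1 :=
  ⟨inv_nonneg.2 (zero_le_one.trans (one_le_scale hq n ω)),
    inv_le_one_of_one_le₀ (one_le_scale hq n ω)⟩

lemma abs_le_one_of_mem_Icc {x : ℝ} (hx : x ∈ Set.Icc (0 : ℝ) 1) : |x| ≤ 1 :=
  abs_le.2 ⟨by linarith [hx.1], hx.2⟩

lemma abs_increment_le (hX : ∀ n ω, X n ω ∈ Set.Icc (0 : ℝ) 1)
    (hq : ∀ n ω, q n ω ∈ Set.Icc (0 : ℝ) 1) (n : ℕ) (ω : Ω) : |increment X q n ω| ≤ 1 := by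
  have hb := one_le_scale (fun n ω => (hq n ω).1) (n + 1) ω
  have hb_pos : 0 < scale q (n + 1) ω := by linarith
  obtain ⟨hX0, hX1⟩ := hX n ω
  obtain ⟨hq0, hq1⟩ := hq n ω
  rw [increment, abs_div, abs_of_pos hb_pos, div_le_one hb_pos, abs_le]
  constructor <;> linarith

lemma abs_normalizedSum_le (hX : ∀ n ω, X n ω ∈ Set.Icc (0 : ℝ) 1)
    (hq : ∀ n ω, q n ω ∈ Set.Icc (0 : ℝ) 1) (n : ℕ) (ω : Ω) : |normalizedSum X q n ω| ≤ n :=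
  calc |normalizedSum X q n ω| ≤ ∑ i ∈ range n, |increment X q i ω| := abs_sum_le_sum_abs _ _
    _ ≤ ∑ _i ∈ range n, (1 : ℝ) := sum_le_sum fun i _ => abs_increment_le hX hq i ω
    _ = n := by simp

lemma sq_div_add_le {x p b : ℝ} (hx : x ∈ Set.Icc (0 : ℝ) 1) (hp : p ∈ Set.Icc (0 : ℝ) 1)
    (hb : 1 ≤ b) :
    ((x - p) / (b + p)) ^ 2 ≤ (x - p) / (b + p) / (b + p) + 2 * (b⁻¹ - (b + p)⁻¹) := by
  obtain ⟨hx0, hx1⟩ := hx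
  obtain ⟨hp0, hp1⟩ := hp
  have hsq : (x - p) ^ 2 ≤ (x - p) + 2 * p := by nlinarith
  have hb0 : 0 < b := by linarith
  field_simp
  nlinarith

lemma energy_succ_le (hX : ∀ n ω, X n ω ∈ Set.Icc (0 : ℝ) 1)
    (hq : ∀ n ω, q n ω ∈ Set.Icc (0 : ℝ) 1) (n : ℕ) (ω : Ω) :
    energy X q (n + 1) ω ≤ energy X q n ω
      + (2 * normalizedSum X q n ω + (scale q (n + 1) ω)⁻¹) * increment X q n ω := by
  have key : increment X q n ω ^ 2 ≤ increment X q n ω / scale q (n + 1) ω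
      + 2 * ((scale q n ω)⁻¹ - (scale q (n + 1) ω)⁻¹) := by
    simpa only [increment, scale_succ] using
      sq_div_add_le (hX n ω) (hq n ω) (one_le_scale (fun n ω => (hq n ω).1) n ω)
  simp only [energy, normalizedSum, sum_range_succ] at key ⊢
  rw [div_eq_mul_inv] at key
  nlinarith [key]

variable {m0 : MeasurableSpace Ω} {μ : Measure Ω} {ℱ : Filtration ℕ m0}

lemma stronglyMeasurable_scale (hqm : StronglyAdapted ℱ q) {k n : ℕ} (hk : k ≤ n + 1) :
    StronglyMeasurable[ℱ n] (scale q k) :=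
  stronglyMeasurable_const.add <| Finset.stronglyMeasurable_fun_sum _ fun i hi =>
    (hqm i).mono (ℱ.mono (by have := mem_range.1 hi; omega))

lemma stronglyMeasurable_increment (hXm : ∀ n, StronglyMeasurable[ℱ (n + 1)] (X n))
    (hqm : StronglyAdapted ℱ q) (n : ℕ) : StronglyMeasurable[ℱ (n + 1)] (increment X q n) :=
  ((hXm n).measurable.sub ((hqm n).mono (ℱ.mono n.le_succ)).measurable |>.div
    ((stronglyMeasurable_scale hqm le_rfl).mono (ℱ.mono n.le_succ)).measurable).stronglyMeasurable

lemma stronglyAdapted_normalizedSum (hXm : ∀ n, StronglyMeasurable[ℱ (n + 1)] (X n))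
    (hqm : StronglyAdapted ℱ q) : StronglyAdapted ℱ (normalizedSum X q) := fun _ =>
  Finset.stronglyMeasurable_fun_sum _ fun i hi =>
    (stronglyMeasurable_increment hXm hqm i).mono (ℱ.mono (mem_range.1 hi))

lemma integrable_of_abs_le [IsFiniteMeasure μ] {m : MeasurableSpace Ω} (hm : m ≤ m0)
    {f : Ω → ℝ} (hf : StronglyMeasurable[m] f) {C : ℝ} (hC : ∀ ω, |f ω| ≤ C) :
    Integrable f μ :=
  .of_bound (hf.mono hm).aestronglyMeasurable C (ae_of_all _ hC)

theorem integral_mul_eq_zero_of_condExp_eq_zero {m : MeasurableSpace Ω} (hm : m ≤ m0)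
    [SigmaFinite (μ.trim hm)] {h f : Ω → ℝ} (hh : StronglyMeasurable[m] h)
    (hhf : Integrable (h * f) μ) (hf : Integrable f μ) (hf0 : μ[f | m] =ᵐ[μ] 0) :
    ∫ ω, h ω * f ω ∂μ = 0 :=
  calc ∫ ω, h ω * f ω ∂μ = ∫ ω, (μ[h * f | m]) ω ∂μ := (integral_condExp hm).symm
    _ = ∫ ω, (h * 0 : Ω → ℝ) ω ∂μ :=
      integral_congr_ae <| (condExp_mul_of_stronglyMeasurable_left hh hhf hf).trans
        (EventuallyEq.rfl.mul hf0)
    _ = 0 := by simp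

lemma max_min_condExp_ae_eq [IsFiniteMeasure μ] {m : MeasurableSpace Ω} (hm : m ≤ m0)
    {f : Ω → ℝ} (hf : Integrable f μ) (hf01 : ∀ ω, f ω ∈ Set.Icc (0 : ℝ) 1) :
    (fun ω => max 0 (min 1 (μ[f | m] ω))) =ᵐ[μ] μ[f | m] := by
  have h0 : ∀ᵐ ω ∂μ, 0 ≤ μ[f | m] ω := condExp_nonneg (ae_of_all _ fun ω => (hf01 ω).1)
  have h1 : μ[f | m] ≤ᵐ[μ] fun _ => (1 : ℝ) := by
    simpa [condExp_const hm] using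
      condExp_mono (m := m) hf (integrable_const (1 : ℝ)) (ae_of_all _ fun ω => (hf01 ω).2)
  filter_upwards [h0, h1] with ω hω0 hω1
  rw [min_eq_right hω1, max_eq_right hω0]

structure IsUnitIntervalCompensator (μ : Measure Ω) (ℱ : Filtration ℕ m0)
    (X q : ℕ → Ω → ℝ) : Prop where
  mem_Icc_X : ∀ n ω, X n ω ∈ Set.Icc (0 : ℝ) 1
  mem_Icc_q : ∀ n ω, q n ω ∈ Set.Icc (0 : ℝ) 1
  stronglyMeasurable_X : ∀ n, StronglyMeasurable[ℱ (n + 1)] (X n)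
  stronglyAdapted_q : StronglyAdapted ℱ q
  condExp_ae_eq : ∀ n, μ[X n | ℱ n] =ᵐ[μ] q n

namespace IsUnitIntervalCompensator

lemma q_nonneg (h : IsUnitIntervalCompensator μ ℱ X q) (n : ℕ) (ω : Ω) : 0 ≤ q n ω :=
  (h.mem_Icc_q n ω).1

lemma integrable_X [IsFiniteMeasure μ] (h : IsUnitIntervalCompensator μ ℱ X q) (n : ℕ) :
    Integrable (X n) μ :=
  integrable_of_abs_le (ℱ.le _) (h.stronglyMeasurable_X n) fun ω =>
    abs_le_one_of_mem_Icc (h.mem_Icc_X n ω)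

lemma integrable_q [IsFiniteMeasure μ] (h : IsUnitIntervalCompensator μ ℱ X q) (n : ℕ) :
    Integrable (q n) μ :=
  integrable_of_abs_le (ℱ.le _) (h.stronglyAdapted_q n) fun ω =>
    abs_le_one_of_mem_Icc (h.mem_Icc_q n ω)

lemma integrable_increment [IsFiniteMeasure μ] (h : IsUnitIntervalCompensator μ ℱ X q)
    (n : ℕ) : Integrable (increment X q n) μ :=
  integrable_of_abs_le (ℱ.le _) (stronglyMeasurable_increment h.stronglyMeasurable_X
    h.stronglyAdapted_q n) (abs_increment_le h.mem_Icc_X h.mem_Icc_q n)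

lemma integrable_normalizedSum [IsFiniteMeasure μ] (h : IsUnitIntervalCompensator μ ℱ X q)
    (n : ℕ) : Integrable (normalizedSum X q n) μ :=
  integrable_of_abs_le (ℱ.le _) (stronglyAdapted_normalizedSum h.stronglyMeasurable_X
    h.stronglyAdapted_q n) (abs_normalizedSum_le h.mem_Icc_X h.mem_Icc_q n)

lemma integrable_inv_scale [IsFiniteMeasure μ] (h : IsUnitIntervalCompensator μ ℱ X q)
    (n : ℕ) : Integrable (fun ω => (scale q n ω)⁻¹) μ :=
  integrable_of_abs_le (ℱ.le n)
    (stronglyMeasurable_scale h.stronglyAdapted_q n.le_succ).measurable.inv.stronglyMeasurable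
    fun ω => abs_le_one_of_mem_Icc (inv_scale_mem_Icc h.q_nonneg n ω)

lemma integrable_energy [IsFiniteMeasure μ] (h : IsUnitIntervalCompensator μ ℱ X q) (n : ℕ) :
    Integrable (energy X q n) μ := by
  have hM := h.integrable_normalizedSum n
  refine ((hM.mul_bdd hM.aestronglyMeasurable (ae_of_all _
    (abs_normalizedSum_le h.mem_Icc_X h.mem_Icc_q n))).add
      ((h.integrable_inv_scale n).const_mul 2)).congr (ae_of_all _ fun ω => ?_)
  simp [energy, sq]

lemma condExp_increment [IsFiniteMeasure μ] (h : IsUnitIntervalCompensator μ ℱ X q) (n : ℕ) :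
    μ[increment X q n | ℱ n] =ᵐ[μ] 0 := by
  have hdiff : μ[X n - q n | ℱ n] =ᵐ[μ] 0 := by
    refine (condExp_sub (h.integrable_X n) (h.integrable_q n) _).trans ?_
    rw [condExp_of_stronglyMeasurable (ℱ.le n) (h.stronglyAdapted_q n) (h.integrable_q n)]
    filter_upwards [h.condExp_ae_eq n] with ω hω
    simp [hω]
  have hinc : increment X q n = (fun ω => (scale q (n + 1) ω)⁻¹) * (X n - q n) := by
    ext ω; simp [increment, div_eq_inv_mul]
  have hs := (stronglyMeasurable_scale h.stronglyAdapted_q (k := n + 1) le_rfl).measurable.inv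
  rw [hinc]
  refine (condExp_mul_of_stronglyMeasurable_left hs.stronglyMeasurable
    (hinc ▸ h.integrable_increment n) ((h.integrable_X n).sub (h.integrable_q n))).trans ?_
  filter_upwards [hdiff] with ω hω
  simp [hω]

lemma martingale_normalizedSum [IsFiniteMeasure μ] (h : IsUnitIntervalCompensator μ ℱ X q) :
    Martingale (normalizedSum X q) ℱ μ := by
  refine martingale_of_condExp_sub_eq_zero_nat
    (stronglyAdapted_normalizedSum h.stronglyMeasurable_X h.stronglyAdapted_q)
    h.integrable_normalizedSum fun n => ?_
  have hsucc : normalizedSum X q (n + 1) - normalizedSum X q n = increment X q n := by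
    ext ω; simp [normalizedSum, sum_range_succ]
  exact hsucc ▸ h.condExp_increment n

lemma integral_energy_le [IsProbabilityMeasure μ] (h : IsUnitIntervalCompensator μ ℱ X q)
    (n : ℕ) : ∫ ω, energy X q n ω ∂μ ≤ 2 := by
  induction n with
  | zero => simp [energy, normalizedSum, scale]
  | succ n ih =>
    have hM := stronglyAdapted_normalizedSum h.stronglyMeasurable_X h.stronglyAdapted_q n
    have hs := stronglyMeasurable_scale h.stronglyAdapted_q (k := n + 1) le_rfl
    set g : Ω → ℝ := fun ω => 2 * normalizedSum X q n ω + (scale q (n + 1) ω)⁻¹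
    have hg : StronglyMeasurable[ℱ n] g :=
      ((hM.measurable.const_mul 2).add hs.measurable.inv).stronglyMeasurable
    have hg_int : Integrable (fun ω => g ω * increment X q n ω) μ :=
      (((h.integrable_normalizedSum n).const_mul 2).add (h.integrable_inv_scale (n + 1))).mul_bdd
        (h.integrable_increment n).aestronglyMeasurable
        (ae_of_all _ (abs_increment_le h.mem_Icc_X h.mem_Icc_q n))
    calc ∫ ω, energy X q (n + 1) ω ∂μ
        ≤ ∫ ω, energy X q n ω + g ω * increment X q n ω ∂μ :=
          integral_mono (h.integrable_energy _) ((h.integrable_energy n).add hg_int)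
            (energy_succ_le h.mem_Icc_X h.mem_Icc_q n)
      _ = ∫ ω, energy X q n ω ∂μ := by
          rw [integral_add (h.integrable_energy n) hg_int,
            integral_mul_eq_zero_of_condExp_eq_zero (ℱ.le n) hg hg_int
              (h.integrable_increment n) (h.condExp_increment n), add_zero]
      _ ≤ 2 := ih

lemma eLpNorm_normalizedSum_le [IsProbabilityMeasure μ]
    (h : IsUnitIntervalCompensator μ ℱ X q) (n : ℕ) :
    eLpNorm (normalizedSum X q n) 1 μ ≤ (3 : ℝ≥0) := by
  have hM := h.integrable_normalizedSum n
  have hle (ω : Ω) : ‖normalizedSum X q n ω‖ ≤ energy X q n ω + 1 := by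
    have hs := (inv_scale_mem_Icc h.q_nonneg n ω).1
    rw [Real.norm_eq_abs, energy]
    nlinarith [abs_nonneg (normalizedSum X q n ω), sq_abs (normalizedSum X q n ω)]
  have hbound : ∫ ω, ‖normalizedSum X q n ω‖ ∂μ ≤ 3 := calc
    _ ≤ ∫ ω, energy X q n ω + 1 ∂μ :=
      integral_mono hM.norm ((h.integrable_energy n).add (integrable_const 1)) hle
    _ = ∫ ω, energy X q n ω ∂μ + 1 := by
      rw [integral_add (h.integrable_energy n) (integrable_const 1)]; simp
    _ ≤ 3 := by linarith [h.integral_energy_le n]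
  rw [eLpNorm_one_eq_lintegral_enorm, ← ofReal_integral_norm_eq_lintegral_enorm hM]
  exact (ENNReal.ofReal_le_ofReal hbound).trans (by norm_num)

lemma ae_tendsto_normalizedSum [IsProbabilityMeasure μ]
    (h : IsUnitIntervalCompensator μ ℱ X q) :
    ∀ᵐ ω ∂μ, ∃ c, Tendsto (normalizedSum X q · ω) atTop (𝓝 c) :=
  h.martingale_normalizedSum.submartingale.exists_ae_tendsto_of_bdd h.eLpNorm_normalizedSum_le

theorem ae_isEquivalent_sum [IsProbabilityMeasure μ] (h : IsUnitIntervalCompensator μ ℱ X q) :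
    ∀ᵐ ω ∂μ, Tendsto (fun n => ∑ i ∈ range n, q i ω) atTop atTop →
      (fun n => ∑ i ∈ range n, X i ω) ~[atTop] fun n => ∑ i ∈ range n, q i ω := by
  filter_upwards [h.ae_tendsto_normalizedSum] with ω ⟨c, hc⟩ hQ
  have hscale : (scale q · ω) ~[atTop] fun n => ∑ i ∈ range n, q i ω :=
    (IsEquivalent.refl.add_isLittleO
      (isLittleO_const_left.2 (Or.inr (tendsto_norm_atTop_atTop.comp hQ)))).congr_left
      (Eventually.of_forall fun n => add_comm _ _)
  have hkron := isLittleO_sum_of_tendsto_sum_div (a := fun i => X i ω - q i ω)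
    (fun n => zero_lt_one.trans_le (one_le_scale h.q_nonneg n ω)) (monotone_scale h.q_nonneg ω)
    (tendsto_atTop_add_const_left _ 1 hQ) hc
  refine (hkron.trans_isBigO hscale.isBigO).congr_left fun n => ?_
  simp [sum_sub_distrib]

end IsUnitIntervalCompensator

end DubinsFreedman

open DubinsFreedman in
/-- Dubins–Freedman, part b: For a filtration `(ℱ_n)` and events
`A_n ∈ ℱ_n` with `q_n = P(A_n | ℱ_{n-1})`, almost surely on `{∑ q_n = ∞}` the ratio
`(∑_{i<n} 1_{A_i}) / (∑_{i<n} q_i)` converges to `1`. -/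
theorem dubins_freedman_divergent {Ω : Type*} {m0 : MeasurableSpace Ω}
    (μ : Measure Ω) [IsProbabilityMeasure μ] (ℱ : Filtration ℕ m0)
    (A : ℕ → Set Ω) (hA : ∀ n, MeasurableSet[ℱ (n + 1)] (A n)) :
    ∀ᵐ ω ∂μ,
      ¬ (Summable fun n => (μ[(A n).indicator (fun _ => (1 : ℝ)) | ℱ n]) ω) →
        Tendsto
          (fun n => (∑ i ∈ Finset.range n, (A i).indicator (fun _ => (1 : ℝ)) ω) /
            (∑ i ∈ Finset.range n, (μ[(A i).indicator (fun _ => (1 : ℝ)) | ℱ i]) ω))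
          atTop (nhds 1) := by
  set X : ℕ → Ω → ℝ := fun n => (A n).indicator fun _ => 1
  set q : ℕ → Ω → ℝ := fun n ω => max 0 (min 1 (μ[X n | ℱ n] ω))
  have hX01 (n : ℕ) (ω : Ω) : X n ω ∈ Set.Icc (0 : ℝ) 1 := by
    by_cases hω : ω ∈ A n <;> simp [X, hω]
  have hq_ae (n : ℕ) : q n =ᵐ[μ] μ[X n | ℱ n] :=
    max_min_condExp_ae_eq (ℱ.le n) ((integrable_const 1).indicator (ℱ.le _ _ (hA n))) (hX01 n)
  have h : IsUnitIntervalCompensator μ ℱ X q :=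
    { mem_Icc_X := hX01
      mem_Icc_q := fun n ω => ⟨le_max_left _ _, max_le zero_le_one (min_le_left _ _)⟩
      stronglyMeasurable_X := fun n => stronglyMeasurable_const.indicator (hA n)
      stronglyAdapted_q := fun n => (measurable_const.max (measurable_const.min
        stronglyMeasurable_condExp.measurable)).stronglyMeasurable
      condExp_ae_eq := fun n => (hq_ae n).symm }
  filter_upwards [h.ae_isEquivalent_sum, ae_all_iff.2 hq_ae] with ω hequiv hqω hdiv
  have hQ := (not_summable_iff_tendsto_nat_atTop_of_nonneg (h.q_nonneg · ω)).1
    (by simpa only [hqω] using hdiv)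
  have hratio := (isEquivalent_iff_tendsto_one (hQ.eventually_ne_atTop 0)).1 (hequiv hQ)
  simp only [hqω] at hratio
  exact hratio
end

section
/- In the AdaSub algorithm, for each variable index j ∈ {1,...,p}, the variable is considered infinitely often in the model search: P(∑_{t=1}^∞ Z_j^{(t)} = ∞) = 1, where Z_j^{(t)} is the indicator that j is included in the sampled subset V^{(t)} at iteration t. -/
/-!
The conditional inclusion probability of `j` at step `t + 1` is
`(q + K ∑ W) / (p + K ∑ Z) ≥ q / (p + K t)`, because `∑ W ≥ 0` and
`j` can have been included at most `t` times so far. These deterministic lower bounds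
have a divergent, harmonic-like sum, so Lévy's conditional Borel–Cantelli lemma forces the
inclusion indicators themselves to have a divergent sum almost surely.
-/

open MeasureTheory Filter Finset

theorem sum_Icc_one_eq_sum_range {M : Type*} [AddCommMonoid M] (f : ℕ → M) (n : ℕ) :
    ∑ t ∈ Icc 1 n, f t = ∑ k ∈ range n, f (k + 1) := by
  rw [← Ico_succ_right_eq_Icc, Nat.succ_eq_succ, Nat.succ_eq_add_one, sum_Ico_eq_sum_range,
    Nat.add_sub_cancel]
  simp only [add_comm 1]

theorem tendsto_sum_range_div_add_mul_atTop {q p K : ℝ} (hq : 0 < q) (hp : 0 < p)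
    (hK : 0 ≤ K) : Tendsto (fun n : ℕ => ∑ k ∈ range n, q / (p + K * k)) atTop atTop := by
  set M := max p K
  have hM : 0 < M := lt_max_of_lt_left hp
  have harmonic :
      Tendsto (fun n : ℕ => q / M * ∑ k ∈ range n, (1 / (k + 1) : ℝ)) atTop atTop :=
    Real.tendsto_sum_range_one_div_nat_succ_atTop.const_mul_atTop (div_pos hq hM)
  refine tendsto_atTop_mono (fun n => ?_) harmonic
  rw [mul_sum]
  refine sum_le_sum fun k _ => ?_
  have hden : p + K * k ≤ M * (k + 1) := by
    nlinarith [le_max_left p K, le_max_right p K, (Nat.cast_nonneg k : (0 : ℝ) ≤ k)]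
  rw [div_mul_div_comm, mul_one]
  exact div_le_div₀ hq.le le_rfl (by positivity) hden

theorem div_add_mul_le_div_add_mul {q p K w z k : ℝ} (hq : 0 ≤ q) (hp : 0 < p) (hK : 0 ≤ K)
    (hw : 0 ≤ w) (hz : 0 ≤ z) (hzk : z ≤ k) :
    q / (p + K * k) ≤ (q + K * w) / (p + K * z) :=
  div_le_div₀ (by positivity) (le_add_of_nonneg_right (by positivity)) (by positivity)
    (by gcongr)

theorem indicator_preimage_one_eq_of_zero_or_one {Ω : Type*} {f : Ω → ℝ}
    (hf : ∀ ω, f ω = 0 ∨ f ω = 1) : (f ⁻¹' {1}).indicator 1 = f := by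
  funext ω
  rcases hf ω with h | h <;> simp [h]

theorem ae_tendsto_sum_atTop_of_le_condExp {Ω : Type*} {m0 : MeasurableSpace Ω}
    {μ : Measure Ω} [IsFiniteMeasure μ] {ℱ : Filtration ℕ m0}
    {Z : ℕ → Ω → ℝ} {a : ℕ → ℝ}
    (hZ01 : ∀ t ω, Z t ω = 0 ∨ Z t ω = 1) (hZ : ∀ t, Measurable[ℱ t] (Z t))
    (ha : Tendsto (fun n => ∑ k ∈ range n, a k) atTop atTop)
    (hle : ∀ t, ∀ᵐ ω ∂μ, a t ≤ μ[Z (t + 1) | ℱ t] ω) :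
    ∀ᵐ ω ∂μ, Tendsto (fun n => ∑ k ∈ range n, Z (k + 1) ω) atTop atTop := by
  have hind t : (Z t ⁻¹' {1}).indicator 1 = Z t :=
    indicator_preimage_one_eq_of_zero_or_one (hZ01 t)
  have hBC := tendsto_sum_indicator_atTop_iff' (μ := μ)
    (fun t => hZ t (measurableSet_singleton (1 : ℝ)))
  simp only [hind] at hBC
  filter_upwards [hBC, ae_all_iff.2 hle] with ω hiff hleω
  exact hiff.2 (tendsto_atTop_mono (fun n => sum_le_sum fun k _ => hleω k) ha)

theorem adaSub_considered_infinitely_often_general {Ω : Type*} {m0 : MeasurableSpace Ω}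
    (μ : Measure Ω) [IsProbabilityMeasure μ] (ℱ : Filtration ℕ m0)
    (q p K : ℝ) (hq : 0 < q) (hqp : q < p) (hK : 0 < K)
    (Z W : ℕ → Ω → ℝ)
    (hZ01 : ∀ t ω, Z t ω = 0 ∨ Z t ω = 1)
    (hW01 : ∀ t ω, W t ω = 0 ∨ W t ω = 1)
    (hZadapt : ∀ t, Measurable[ℱ t] (Z t))
    (hcond : ∀ t : ℕ, (μ[Z (t + 1) | ℱ t]) =ᵐ[μ] fun ω =>
      (q + K * ∑ i ∈ Finset.Icc 1 t, W i ω) / (p + K * ∑ i ∈ Finset.Icc 1 t, Z i ω)) :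
    ∀ᵐ ω ∂μ, Tendsto (fun n => ∑ t ∈ Finset.Icc 1 n, Z t ω) atTop atTop := by
  have hp : 0 < p := hq.trans hqp
  have hZ_nonneg t ω : 0 ≤ Z t ω := by rcases hZ01 t ω with h | h <;> simp [h]
  have hZ_le_one t ω : Z t ω ≤ 1 := by rcases hZ01 t ω with h | h <;> simp [h]
  have hW_nonneg t ω : 0 ≤ W t ω := by rcases hW01 t ω with h | h <;> simp [h]
  have hbound (t : ℕ) : ∀ᵐ ω ∂μ, q / (p + K * t) ≤ μ[Z (t + 1) | ℱ t] ω := by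
    filter_upwards [hcond t] with ω hω
    rw [hω]
    refine div_add_mul_le_div_add_mul hq.le hp hK.le (sum_nonneg fun i _ => hW_nonneg i ω)
      (sum_nonneg fun i _ => hZ_nonneg i ω) ?_
    simpa using sum_le_card_nsmul (Icc 1 t) (Z · ω) 1 fun i _ => hZ_le_one i ω
  filter_upwards [ae_tendsto_sum_atTop_of_le_condExp hZ01 hZadapt
    (tendsto_sum_range_div_add_mul_atTop hq hp hK.le) hbound] with ω hω
  simpa only [sum_Icc_one_eq_sum_range] using hω

/-- In AdaSub, for a fixed variable index `j`, the variable is considered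
infinitely often: almost surely `∑_{t=1}^∞ Z_j^{(t)} = ∞`. Here `Z t` is the {0,1}-valued
indicator that `j ∈ V^{(t)}`, `W t` the indicator that `j ∈ f_C(V^{(t)})`, and the
conditional inclusion probability is `r^{(t)} = (q + K ∑_{i≤t} W_i)/(p + K ∑_{i≤t} Z_i)`. -/
theorem adaSub_considered_infinitely_often {Ω : Type*} {m0 : MeasurableSpace Ω}
    (μ : Measure Ω) [IsProbabilityMeasure μ] (ℱ : Filtration ℕ m0)
    (q p K : ℝ) (hq : 0 < q) (hqp : q < p) (hK : 0 < K)
    (Z W : ℕ → Ω → ℝ)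
    (hZ01 : ∀ t ω, Z t ω = 0 ∨ Z t ω = 1)
    (hW01 : ∀ t ω, W t ω = 0 ∨ W t ω = 1)
    (hWZ : ∀ t ω, W t ω ≤ Z t ω)
    (hZadapt : ∀ t, Measurable[ℱ t] (Z t))
    (hWadapt : ∀ t, Measurable[ℱ t] (W t))
    (hcond : ∀ t : ℕ, (μ[Z (t + 1) | ℱ t]) =ᵐ[μ] fun ω =>
      (q + K * ∑ i ∈ Finset.Icc 1 t, W i ω) / (p + K * ∑ i ∈ Finset.Icc 1 t, Z i ω)) :
    ∀ᵐ ω ∂μ, Tendsto (fun n => ∑ t ∈ Finset.Icc 1 n, Z t ω) atTop atTop :=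
  adaSub_considered_infinitely_often_general μ ℱ q p K hq hqp hK Z W hZ01 hW01 hZadapt hcond
end

section
/- (Key convergence lemma for AdaSub) Fix j ∈ {1,...,p}. If the conditional selection success probabilities p_j^{(t)} = P(W_j^{(t)} = 1 | Z_j^{(t)} = 1, ℱ^{(t-1)}) converge almost surely to a random variable p_j* as t → ∞, then the AdaSub selection probabilities r_j^{(t)} = (q + K ∑_{i≤t} W_j^{(i)}) / (p + K ∑_{i≤t} Z_j^{(i)}) also converge almost surely to p_j* as t → ∞. -/
/-!
Write `D_t = p + K ∑_{i ≤ t} Z_i`, so that `D_{t+1} r_{t+1} = D_t r_t + K W_{t+1}`. The noise is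
carried by the martingale `M_n = ∑_{t < n} K (W_{t+1} - p_{t+1} Z_{t+1}) / D_{t+1}`: the process
`u = r - M` satisfies `D_{t+1} u_{t+1} = D_t u_t + (D_{t+1} - D_t) (p_{t+1} - M_t)`, so `u_t` is a
`D`-weighted average of the `p_{s+1} - M_s`. The quadratic variation of `M` telescopes,
`∑ (ΔM_t)² ≤ ∑ K (1/D_t - 1/D_{t+1}) ≤ K/p`, so `M` is bounded in `L²` and converges a.s.
Moreover `D_t → ∞` a.s. by Lévy's conditional Borel–Cantelli lemma, because
`E[Z_{t+1} | ℱ_t] = r_t ≥ q / (p + K t)` is not summable. Hence `u → p* - lim M` and `r → p*`.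
-/

open MeasureTheory Filter Finset Asymptotics Topology

theorem tendsto_of_mul_succ_eq_mul_add {D u x : ℕ → ℝ} {L : ℝ}
    (hD : Monotone D) (hDtop : Tendsto D atTop atTop)
    (hrec : ∀ t, D (t + 1) * u (t + 1) = D t * u t + (D (t + 1) - D t) * x t)
    (hx : Tendsto x atTop (𝓝 L)) : Tendsto u atTop (𝓝 L) := by
  set b : ℕ → ℝ := fun t => D (t + 1) - D t
  have hb : 0 ≤ b := fun t => sub_nonneg.2 (hD t.le_succ)
  have hsum : ∀ n, D n * (u n - L) = D 0 * (u 0 - L) + ∑ t ∈ range n, b t * (x t - L) := by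
    intro n
    induction n with
    | zero => simp
    | succ n ih => rw [sum_range_succ, ← add_assoc, ← ih]; linear_combination hrec n
  have hconst : ∀ c : ℝ, (fun _ : ℕ => c) =o[atTop] D := fun c =>
    isLittleO_const_left.2 (Or.inr (tendsto_norm_atTop_atTop.comp hDtop))
  have hsum_b : (fun n => ∑ t ∈ range n, b t) =O[atTop] D := by
    simp only [b, sum_range_sub]
    exact (isBigO_refl D atTop).sub (hconst _).isBigO
  have hsum_o : (fun n => ∑ t ∈ range n, b t * (x t - L)) =o[atTop] D := by
    refine (IsLittleO.sum_range ?_ hb ?_).trans_isBigO hsum_b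
    · simpa [mul_comm] using
        ((isLittleO_one_iff ℝ).2 (tendsto_sub_nhds_zero_iff.2 hx)).mul_isBigO (isBigO_refl b atTop)
    · simp only [b, sum_range_sub]
      exact tendsto_atTop_add_const_right _ (-D 0) hDtop
  have hmain : (fun n => D n * (u n - L)) =o[atTop] D :=
    ((hconst _).add hsum_o).congr_left fun n => (hsum n).symm
  refine tendsto_sub_nhds_zero_iff.1 ((hmain.tendsto_div_nhds_zero).congr' ?_)
  filter_upwards [hDtop.eventually_gt_atTop 0] with n hn
  field_simp

theorem tendsto_sum_range_div_atTop {a c K : ℝ} (ha : 0 < a) (hc : 0 < c) (hK : 0 < K) :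
    Tendsto (fun n => ∑ k ∈ range n, a / (c + K * k)) atTop atTop := by
  have hC : 0 < a / (c + K) := by positivity
  refine tendsto_atTop_mono (fun n => ?_)
    (Real.tendsto_sum_range_one_div_nat_succ_atTop.const_mul_atTop hC)
  rw [mul_sum]
  refine sum_le_sum fun k _ => ?_
  rw [mul_one_div, div_div, div_le_div_iff_of_pos_left ha (by positivity) (by positivity)]
  nlinarith [(k.cast_nonneg : (0 : ℝ) ≤ k)]

section MartingaleDifferences

variable {Ω : Type*} {m0 : MeasurableSpace Ω} {μ : Measure Ω} [IsFiniteMeasure μ]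

theorem condExp_mul_eq_zero_of_condExp_eq_zero {m : MeasurableSpace Ω} (hm : m ≤ m0)
    {f g : Ω → ℝ} {c : ℝ} (hf : StronglyMeasurable[m] f) (hfc : ∀ ω, |f ω| ≤ c)
    (hg : Integrable g μ) (hcond : μ[g | m] =ᵐ[μ] 0) :
    μ[f * g | m] =ᵐ[μ] 0 := by
  filter_upwards [condExp_stronglyMeasurable_mul_of_bound hm hf hg c (ae_of_all _ hfc), hcond]
    with ω hpull hzero
  rw [hpull, Pi.mul_apply, hzero, Pi.zero_apply, mul_zero]

theorem integral_mul_eq_zero_of_condExp_eq_zero {m : MeasurableSpace Ω} (hm : m ≤ m0)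
    {f g : Ω → ℝ} {c : ℝ} (hf : StronglyMeasurable[m] f) (hfc : ∀ ω, |f ω| ≤ c)
    (hg : Integrable g μ) (hcond : μ[g | m] =ᵐ[μ] 0) :
    ∫ ω, f ω * g ω ∂μ = 0 := by
  change ∫ ω, (f * g) ω ∂μ = 0
  rw [← integral_condExp hm, integral_congr_ae
    (condExp_mul_eq_zero_of_condExp_eq_zero hm hf hfc hg hcond)]
  exact integral_zero Ω ℝ

theorem condExp_sub_mul_eq_zero {m : MeasurableSpace Ω} (hm : m ≤ m0) {f V Y : Ω → ℝ} {c : ℝ}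
    (hf : StronglyMeasurable[m] f) (hfc : ∀ ω, |f ω| ≤ c) (hV : Integrable V μ)
    (hY : Integrable Y μ) (hcond : μ[V | m] =ᵐ[μ] f * μ[Y | m]) :
    μ[V - f * Y | m] =ᵐ[μ] 0 := by
  have hfY : Integrable (f * Y) μ :=
    hY.bdd_mul (hf.mono hm).aestronglyMeasurable (ae_of_all _ hfc)
  filter_upwards [condExp_sub hV hfY m, condExp_stronglyMeasurable_mul_of_bound hm hf hY c
    (ae_of_all _ hfc), hcond] with ω hsub hpull hVω
  rw [hsub, Pi.sub_apply, hpull, hVω, sub_self, Pi.zero_apply]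

theorem eLpNorm_one_le_of_integral_sq_le {f : Ω → ℝ} {B : ℝ} (hf : Integrable f μ)
    (hf_sq : Integrable (fun ω => f ω ^ 2) μ) (hB : ∫ ω, f ω ^ 2 ∂μ ≤ B) :
    eLpNorm f 1 μ ≤ ENNReal.ofReal (μ.real Set.univ + B) := by
  rw [eLpNorm_one_eq_lintegral_enorm, ← ofReal_integral_norm_eq_lintegral_enorm hf]
  refine ENNReal.ofReal_le_ofReal ?_
  calc ∫ ω, ‖f ω‖ ∂μ ≤ ∫ ω, (1 + f ω ^ 2) ∂μ :=
        integral_mono hf.norm ((integrable_const 1).add hf_sq) fun ω => by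
          nlinarith [Real.norm_eq_abs (f ω), sq_abs (f ω), sq_nonneg (|f ω| - 1)]
    _ ≤ μ.real Set.univ + B := by
        rw [integral_add (integrable_const 1) hf_sq, integral_const, smul_eq_mul, mul_one]
        linarith

theorem integrable_sq_of_abs_le {f : Ω → ℝ} {C : ℝ} (hf : AEStronglyMeasurable f μ)
    (hC : ∀ ω, |f ω| ≤ C) : Integrable (fun ω => f ω ^ 2) μ := by
  simpa only [sq] using (Integrable.of_bound hf C (ae_of_all _ hC)).bdd_mul hf (ae_of_all _ hC)

variable {ℱ : Filtration ℕ m0} {ξ : ℕ → Ω → ℝ}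

theorem stronglyMeasurable_sum_range_of_succ (hmeas : ∀ t, StronglyMeasurable[ℱ (t + 1)] (ξ t))
    (n : ℕ) : StronglyMeasurable[ℱ n] fun ω => ∑ t ∈ range n, ξ t ω :=
  Finset.stronglyMeasurable_fun_sum _ fun t ht => (hmeas t).mono (ℱ.mono (mem_range.1 ht))

theorem abs_sum_range_le {R : ℝ} (hbdd : ∀ t ω, |ξ t ω| ≤ R) (n : ℕ) (ω : Ω) :
    |∑ t ∈ range n, ξ t ω| ≤ n * R :=
  (abs_sum_le_sum_abs _ _).trans <|
    (sum_le_sum fun t (_ : t ∈ range n) => hbdd t ω).trans_eq (by simp)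

theorem integral_sq_sum_range_eq_of_condExp_eq_zero {R : ℝ}
    (hmeas : ∀ t, StronglyMeasurable[ℱ (t + 1)] (ξ t)) (hbdd : ∀ t ω, |ξ t ω| ≤ R)
    (hcond : ∀ t, μ[ξ t | ℱ t] =ᵐ[μ] 0) (n : ℕ) :
    ∫ ω, (∑ t ∈ range n, ξ t ω) ^ 2 ∂μ = ∑ t ∈ range n, ∫ ω, ξ t ω ^ 2 ∂μ := by
  have hsum_meas := stronglyMeasurable_sum_range_of_succ hmeas
  have hsum_bdd := abs_sum_range_le hbdd
  induction n with
  | zero => simp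
  | succ n ih =>
    set S : Ω → ℝ := fun ω => ∑ t ∈ range n, ξ t ω
    have hS_sm := (hsum_meas n).mono (ℱ.le n)
    have hξ_sm := (hmeas n).mono (ℱ.le (n + 1))
    have hξ : Integrable (ξ n) μ := .of_bound hξ_sm.aestronglyMeasurable _ (ae_of_all _ (hbdd n))
    have hSS : Integrable (fun ω => S ω ^ 2) μ :=
      integrable_sq_of_abs_le hS_sm.aestronglyMeasurable (hsum_bdd n)
    have hSξ : Integrable (fun ω => S ω * ξ n ω) μ :=
      hξ.bdd_mul hS_sm.aestronglyMeasurable (ae_of_all _ (hsum_bdd n))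
    have hξξ : Integrable (fun ω => ξ n ω ^ 2) μ :=
      integrable_sq_of_abs_le hξ_sm.aestronglyMeasurable (hbdd n)
    have hcross : ∫ ω, S ω * ξ n ω ∂μ = 0 :=
      integral_mul_eq_zero_of_condExp_eq_zero (ℱ.le n) (hsum_meas n) (hsum_bdd n) hξ (hcond n)
    calc ∫ ω, (∑ t ∈ range (n + 1), ξ t ω) ^ 2 ∂μ
        = ∫ ω, (S ω ^ 2 + 2 * (S ω * ξ n ω) + ξ n ω ^ 2) ∂μ := by
          congr with ω
          rw [sum_range_succ]
          ring
      _ = ∫ ω, S ω ^ 2 ∂μ + 2 * ∫ ω, S ω * ξ n ω ∂μ + ∫ ω, ξ n ω ^ 2 ∂μ := by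
          have h2Sξ : Integrable (fun ω => 2 * (S ω * ξ n ω)) μ := hSξ.const_mul 2
          rw [integral_add (f := fun ω => S ω ^ 2 + 2 * (S ω * ξ n ω)) (hSS.add h2Sξ) hξξ,
            integral_add hSS h2Sξ, integral_const_mul]
      _ = ∑ t ∈ range (n + 1), ∫ ω, ξ t ω ^ 2 ∂μ := by
          rw [ih, hcross, sum_range_succ, mul_zero, add_zero]

theorem ae_exists_tendsto_sum_range_of_condExp_eq_zero {C : ℝ}
    (hmeas : ∀ t, StronglyMeasurable[ℱ (t + 1)] (ξ t)) (hcond : ∀ t, μ[ξ t | ℱ t] =ᵐ[μ] 0)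
    (hsq : ∀ n ω, ∑ t ∈ range n, ξ t ω ^ 2 ≤ C) :
    ∀ᵐ ω ∂μ, ∃ c, Tendsto (fun n => ∑ t ∈ range n, ξ t ω) atTop (𝓝 c) := by
  have hbdd : ∀ t ω, |ξ t ω| ≤ √C := fun t ω => Real.abs_le_sqrt <|
    (single_le_sum (fun i _ => sq_nonneg (ξ i ω)) (self_mem_range_succ t)).trans (hsq (t + 1) ω)
  set M : ℕ → Ω → ℝ := fun n ω => ∑ t ∈ range n, ξ t ω
  have hM_meas : ∀ n, StronglyMeasurable[ℱ n] (M n) := stronglyMeasurable_sum_range_of_succ hmeas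
  have hM_int : ∀ n, Integrable (M n) μ := fun n =>
    .of_bound ((hM_meas n).mono (ℱ.le n)).aestronglyMeasurable _
      (ae_of_all _ (abs_sum_range_le hbdd n))
  have hmart : Martingale M ℱ μ := martingale_of_condExp_sub_eq_zero_nat hM_meas hM_int
    fun n => by
      have hsucc : M (n + 1) - M n = ξ n := by ext ω; simp [M, sum_range_succ]
      exact hsucc ▸ hcond n
  have hL1 : ∀ n, eLpNorm (M n) 1 μ ≤ ENNReal.ofReal (μ.real Set.univ + μ.real Set.univ * C) := by
    intro n
    have hξ_sq : ∀ t, Integrable (fun ω => ξ t ω ^ 2) μ := fun t =>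
      integrable_sq_of_abs_le ((hmeas t).mono (ℱ.le _)).aestronglyMeasurable (hbdd t)
    have hM_sq : Integrable (fun ω => M n ω ^ 2) μ := integrable_sq_of_abs_le
      ((hM_meas n).mono (ℱ.le n)).aestronglyMeasurable (abs_sum_range_le hbdd n)
    refine eLpNorm_one_le_of_integral_sq_le (hM_int n) hM_sq ?_
    calc ∫ ω, M n ω ^ 2 ∂μ = ∫ ω, ∑ t ∈ range n, ξ t ω ^ 2 ∂μ := by
          rw [integral_sq_sum_range_eq_of_condExp_eq_zero hmeas hbdd hcond,
            integral_finsetSum _ fun t _ => hξ_sq t]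
      _ ≤ ∫ _, C ∂μ :=
          integral_mono (integrable_finsetSum _ fun t _ => hξ_sq t) (integrable_const C) (hsq n)
      _ = μ.real Set.univ * C := by rw [integral_const, smul_eq_mul]
  exact hmart.submartingale.exists_ae_tendsto_of_bdd
    (R := (μ.real Set.univ + μ.real Set.univ * C).toNNReal) hL1

theorem ae_tendsto_sum_atTop_of_sum_condExp_tendsto_atTop {X : ℕ → Ω → ℝ} {R : NNReal}
    (hX0 : ∀ t ω, 0 ≤ X t ω) (hXR : ∀ t ω, X t ω ≤ R)
    (hmeas : ∀ t, StronglyMeasurable[ℱ t] (X t))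
    (hdiv : ∀ᵐ ω ∂μ, Tendsto (fun n => ∑ k ∈ range n, μ[X (k + 1) | ℱ k] ω) atTop atTop) :
    ∀ᵐ ω ∂μ, Tendsto (fun n => ∑ k ∈ range n, X (k + 1) ω) atTop atTop := by
  set S : ℕ → Ω → ℝ := fun n ω => ∑ k ∈ range n, X (k + 1) ω
  have hincr : ∀ n, S (n + 1) - S n = X (n + 1) := fun n => by ext ω; simp [S, sum_range_succ]
  have hX_bdd : ∀ t ω, |X (t + 1) ω| ≤ R := fun t ω => (abs_of_nonneg (hX0 _ ω)).trans_le (hXR _ ω)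
  have hS_meas : ∀ n, StronglyMeasurable[ℱ n] (S n) :=
    stronglyMeasurable_sum_range_of_succ (ξ := fun k => X (k + 1)) fun k => hmeas (k + 1)
  have hlevy := tendsto_sum_indicator_atTop_iff (R := R) (μ := μ)
    (ae_of_all _ fun ω n => by simpa [S, sum_range_succ] using hX0 (n + 1) ω) hS_meas
    (fun n => .of_bound ((hS_meas n).mono (ℱ.le n)).aestronglyMeasurable _
      (ae_of_all _ (abs_sum_range_le hX_bdd n)))
    (ae_of_all _ fun ω n => by
      rw [show S (n + 1) ω - S n ω = X (n + 1) ω from congrFun (hincr n) ω]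
      exact hX_bdd n ω)
  filter_upwards [hlevy, hdiv] with ω hlevy hdiv
  refine hlevy.2 (hdiv.congr fun n => ?_)
  simp only [predictablePart, hincr, Finset.sum_apply]

end MartingaleDifferences

theorem nonneg_of_eq_zero_or_eq_one {x : ℝ} (h : x = 0 ∨ x = 1) : 0 ≤ x := by
  rcases h with rfl | rfl <;> norm_num

theorem le_one_of_eq_zero_or_eq_one {x : ℝ} (h : x = 0 ∨ x = 1) : x ≤ 1 := by
  rcases h with rfl | rfl <;> norm_num

theorem abs_le_one_of_eq_zero_or_eq_one {x : ℝ} (h : x = 0 ∨ x = 1) : |x| ≤ 1 := by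
  rcases h with rfl | rfl <;> norm_num

section AdaSub

variable {Ω : Type*} {m0 : MeasurableSpace Ω}

/-- `runningTotal q K W t` and `runningTotal p K Z t` are the numerator and denominator of the
AdaSub selection probability `r^{(t)}`. -/
def runningTotal (a K : ℝ) (X : ℕ → Ω → ℝ) (t : ℕ) (ω : Ω) : ℝ :=
  a + K * ∑ i ∈ Icc 1 t, X i ω

variable {a K : ℝ} {X : ℕ → Ω → ℝ}

@[simp]
theorem runningTotal_zero (ω : Ω) : runningTotal a K X 0 ω = a := by
  simp [runningTotal]

theorem runningTotal_succ (t : ℕ) (ω : Ω) :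
    runningTotal a K X (t + 1) ω = runningTotal a K X t ω + K * X (t + 1) ω := by
  rw [runningTotal, runningTotal, sum_Icc_succ_top (by omega)]
  ring

theorem runningTotal_eq_sum_range (t : ℕ) (ω : Ω) :
    runningTotal a K X t ω = a + K * ∑ k ∈ range t, X (k + 1) ω := by
  induction t with
  | zero => simp
  | succ t ih => rw [runningTotal_succ, ih, sum_range_succ]; ring

theorem monotone_runningTotal (hK : 0 ≤ K) (hX : ∀ t ω, 0 ≤ X t ω) (ω : Ω) :
    Monotone fun t => runningTotal a K X t ω :=
  monotone_nat_of_le_succ fun t => by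
    simpa [runningTotal_succ] using mul_nonneg hK (hX (t + 1) ω)

theorem le_runningTotal (hK : 0 ≤ K) (hX : ∀ t ω, 0 ≤ X t ω) (t : ℕ) (ω : Ω) :
    a ≤ runningTotal a K X t ω := by
  simpa using monotone_runningTotal hK hX ω (Nat.zero_le t)

theorem runningTotal_pos (ha : 0 < a) (hK : 0 ≤ K) (hX : ∀ t ω, 0 ≤ X t ω) (t : ℕ) (ω : Ω) :
    0 < runningTotal a K X t ω :=
  ha.trans_le (le_runningTotal hK hX t ω)

theorem runningTotal_le (hK : 0 ≤ K) (hX : ∀ t ω, X t ω ≤ 1) (t : ℕ) (ω : Ω) :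
    runningTotal a K X t ω ≤ a + K * t := by
  rw [runningTotal_eq_sum_range]
  gcongr
  exact (sum_le_sum fun k (_ : k ∈ range t) => hX (k + 1) ω).trans_eq (by simp)

theorem measurable_runningTotal {ℱ : Filtration ℕ m0} (hX : ∀ t, Measurable[ℱ t] (X t))
    (t : ℕ) : Measurable[ℱ t] (runningTotal a K X t) :=
  measurable_const.add <| measurable_const.mul <| Finset.measurable_fun_sum _ fun i hi =>
    (hX i).mono (ℱ.mono (mem_Icc.1 hi).2) le_rfl

variable {μ : Measure Ω} [IsFiniteMeasure μ] {ℱ : Filtration ℕ m0} {q p : ℝ} {Z W pf : ℕ → Ω → ℝ}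

theorem ae_tendsto_runningTotal_atTop (hq : 0 < q) (hp : 0 < p) (hK : 0 < K)
    (hZ0 : ∀ t ω, 0 ≤ Z t ω) (hZ1 : ∀ t ω, Z t ω ≤ 1) (hW0 : ∀ t ω, 0 ≤ W t ω)
    (hZadapt : ∀ t, Measurable[ℱ t] (Z t))
    (hZcond : ∀ t, μ[Z (t + 1) | ℱ t] =ᵐ[μ]
      fun ω => runningTotal q K W t ω / runningTotal p K Z t ω) :
    ∀ᵐ ω ∂μ, Tendsto (fun t => runningTotal p K Z t ω) atTop atTop := by
  have hdiv : ∀ᵐ ω ∂μ,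
      Tendsto (fun n => ∑ k ∈ range n, μ[Z (k + 1) | ℱ k] ω) atTop atTop := by
    filter_upwards [ae_all_iff.2 hZcond] with ω hω
    refine tendsto_atTop_mono (fun n => sum_le_sum fun k _ => ?_)
      (tendsto_sum_range_div_atTop hq hp hK)
    rw [hω k]
    exact div_le_div₀ (runningTotal_pos hq hK.le hW0 k ω).le (le_runningTotal hK.le hW0 k ω)
      (runningTotal_pos hp hK.le hZ0 k ω) (runningTotal_le hK.le hZ1 k ω)
  filter_upwards [ae_tendsto_sum_atTop_of_sum_condExp_tendsto_atTop (R := 1) hZ0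
    (by simpa using hZ1) (fun t => (hZadapt t).stronglyMeasurable) hdiv] with ω hω
  simp_rw [runningTotal_eq_sum_range]
  exact tendsto_atTop_add_const_left _ p (hω.const_mul_atTop hK)

/-- The increment `K (W_{t+1} - p_{t+1} Z_{t+1}) / D_{t+1}` of the martingale part of `r^{(t)}`,
written with the `ℱ_t`-measurable factor `K / (D_t + K)`: it equals `K / D_{t+1}` when
`Z_{t+1} = 1`, and both sides vanish when `Z_{t+1} = 0`. -/
noncomputable def adaSubIncrement (p K : ℝ) (Z W pf : ℕ → Ω → ℝ) (t : ℕ) (ω : Ω) : ℝ :=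
  K / (runningTotal p K Z t ω + K) * (W (t + 1) ω - pf (t + 1) ω * Z (t + 1) ω)

theorem runningTotal_succ_mul_adaSubIncrement (hp : 0 < p) (hK : 0 < K)
    (hZ01 : ∀ t ω, Z t ω = 0 ∨ Z t ω = 1) (hW0 : ∀ t ω, 0 ≤ W t ω)
    (hWZ : ∀ t ω, W t ω ≤ Z t ω) (t : ℕ) (ω : Ω) :
    runningTotal p K Z (t + 1) ω * adaSubIncrement p K Z W pf t ω =
      K * (W (t + 1) ω - pf (t + 1) ω * Z (t + 1) ω) := by
  have hD := runningTotal_pos hp hK.le (fun t ω => nonneg_of_eq_zero_or_eq_one (hZ01 t ω)) t ω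
  rcases hZ01 (t + 1) ω with hz | hz
  · have hw : W (t + 1) ω = 0 := le_antisymm (hz ▸ hWZ (t + 1) ω) (hW0 (t + 1) ω)
    simp [adaSubIncrement, hz, hw]
  · rw [adaSubIncrement, runningTotal_succ, hz]
    field_simp

theorem adaSubIncrement_sq_le (hp : 0 < p) (hK : 0 < K)
    (hZ01 : ∀ t ω, Z t ω = 0 ∨ Z t ω = 1) (hW0 : ∀ t ω, 0 ≤ W t ω)
    (hWZ : ∀ t ω, W t ω ≤ Z t ω) (hpf : ∀ t ω, 0 ≤ pf t ω ∧ pf t ω ≤ 1) (t : ℕ) (ω : Ω) :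
    adaSubIncrement p K Z W pf t ω ^ 2 ≤
      K * (1 / runningTotal p K Z t ω - 1 / runningTotal p K Z (t + 1) ω) := by
  have hD := runningTotal_pos hp hK.le (fun t ω => nonneg_of_eq_zero_or_eq_one (hZ01 t ω)) t ω
  rcases hZ01 (t + 1) ω with hz | hz
  · have hw : W (t + 1) ω = 0 := le_antisymm (hz ▸ hWZ (t + 1) ω) (hW0 (t + 1) ω)
    simp [adaSubIncrement, runningTotal_succ, hz, hw]
  · rw [runningTotal_succ, hz, mul_one]
    set D := runningTotal p K Z t ω
    have hw1 : W (t + 1) ω ≤ 1 := hz ▸ hWZ (t + 1) ω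
    have hdiff : (W (t + 1) ω - pf (t + 1) ω) ^ 2 ≤ 1 := by
      nlinarith [hW0 (t + 1) ω, hpf (t + 1) ω]
    calc adaSubIncrement p K Z W pf t ω ^ 2
        = K ^ 2 / (D + K) ^ 2 * (W (t + 1) ω - pf (t + 1) ω) ^ 2 := by
          rw [adaSubIncrement, hz, mul_one, mul_pow, div_pow]
      _ ≤ K ^ 2 / (D + K) ^ 2 := mul_le_of_le_one_right (by positivity) hdiff
      _ ≤ K ^ 2 / (D * (D + K)) := by gcongr; nlinarith
      _ = K * (1 / D - 1 / (D + K)) := by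
          field_simp
          ring

theorem sum_range_adaSubIncrement_sq_le (hp : 0 < p) (hK : 0 < K)
    (hZ01 : ∀ t ω, Z t ω = 0 ∨ Z t ω = 1) (hW0 : ∀ t ω, 0 ≤ W t ω)
    (hWZ : ∀ t ω, W t ω ≤ Z t ω) (hpf : ∀ t ω, 0 ≤ pf t ω ∧ pf t ω ≤ 1) (n : ℕ) (ω : Ω) :
    ∑ t ∈ range n, adaSubIncrement p K Z W pf t ω ^ 2 ≤ K / p := by
  have hDn := runningTotal_pos hp hK.le (fun t ω => nonneg_of_eq_zero_or_eq_one (hZ01 t ω)) n ω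
  calc ∑ t ∈ range n, adaSubIncrement p K Z W pf t ω ^ 2
      ≤ K * ∑ t ∈ range n, (1 / runningTotal p K Z t ω - 1 / runningTotal p K Z (t + 1) ω) := by
        rw [mul_sum]
        exact sum_le_sum fun t _ => adaSubIncrement_sq_le hp hK hZ01 hW0 hWZ hpf t ω
    _ = K * (1 / p - 1 / runningTotal p K Z n ω) := by rw [sum_range_sub', runningTotal_zero]
    _ ≤ K / p := by
        rw [mul_sub, mul_one_div]
        exact sub_le_self _ (by positivity)

theorem measurable_adaSubIncrement (hZadapt : ∀ t, Measurable[ℱ t] (Z t))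
    (hWadapt : ∀ t, Measurable[ℱ t] (W t)) (hpadapt : ∀ t, Measurable[ℱ t] (pf (t + 1)))
    (t : ℕ) : Measurable[ℱ (t + 1)] (adaSubIncrement p K Z W pf t) :=
  (measurable_const.div ((measurable_runningTotal hZadapt t).add_const K)).mono
    (ℱ.mono t.le_succ) le_rfl |>.mul <| (hWadapt (t + 1)).sub <|
    ((hpadapt t).mono (ℱ.mono t.le_succ) le_rfl).mul (hZadapt (t + 1))

theorem condExp_adaSubIncrement_eq_zero (hp : 0 ≤ p) (hK : 0 ≤ K)
    (hZ01 : ∀ t ω, Z t ω = 0 ∨ Z t ω = 1) (hW01 : ∀ t ω, W t ω = 0 ∨ W t ω = 1)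
    (hpf : ∀ t ω, 0 ≤ pf t ω ∧ pf t ω ≤ 1)
    (hZadapt : ∀ t, Measurable[ℱ t] (Z t)) (hWadapt : ∀ t, Measurable[ℱ t] (W t))
    (hpadapt : ∀ t, Measurable[ℱ t] (pf (t + 1)))
    (hZcond : ∀ t, μ[Z (t + 1) | ℱ t] =ᵐ[μ]
      fun ω => runningTotal q K W t ω / runningTotal p K Z t ω)
    (hWcond : ∀ t, μ[W (t + 1) | ℱ t] =ᵐ[μ]
      fun ω => pf (t + 1) ω * (runningTotal q K W t ω / runningTotal p K Z t ω))
    (t : ℕ) : μ[adaSubIncrement p K Z W pf t | ℱ t] =ᵐ[μ] 0 := by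
  have hZ_int : Integrable (Z (t + 1)) μ :=
    .of_bound ((hZadapt _).mono (ℱ.le _) le_rfl).aestronglyMeasurable 1
      (ae_of_all _ fun ω => abs_le_one_of_eq_zero_or_eq_one (hZ01 _ ω))
  have hW_int : Integrable (W (t + 1)) μ :=
    .of_bound ((hWadapt _).mono (ℱ.le _) le_rfl).aestronglyMeasurable 1
      (ae_of_all _ fun ω => abs_le_one_of_eq_zero_or_eq_one (hW01 _ ω))
  have hpf_bdd : ∀ ω, |pf (t + 1) ω| ≤ 1 := fun ω =>
    abs_le.2 ⟨by linarith [hpf (t + 1) ω], (hpf (t + 1) ω).2⟩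
  have hpfZ_int : Integrable (pf (t + 1) * Z (t + 1)) μ := hZ_int.bdd_mul
    ((hpadapt t).mono (ℱ.le t) le_rfl).aestronglyMeasurable (ae_of_all _ hpf_bdd)
  have hcentered : μ[W (t + 1) - pf (t + 1) * Z (t + 1) | ℱ t] =ᵐ[μ] 0 :=
    condExp_sub_mul_eq_zero (ℱ.le t) (hpadapt t).stronglyMeasurable hpf_bdd hW_int hZ_int <| by
      filter_upwards [hWcond t, hZcond t] with ω hW hZ
      rw [hW, Pi.mul_apply, hZ]
  refine condExp_mul_eq_zero_of_condExp_eq_zero (ℱ.le t)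
    (measurable_const.div ((measurable_runningTotal hZadapt t).add_const K)).stronglyMeasurable
    (c := 1) (fun ω => ?_) (hW_int.sub hpfZ_int) hcentered
  have hD : 0 ≤ runningTotal p K Z t ω :=
    hp.trans (le_runningTotal hK (fun t ω => nonneg_of_eq_zero_or_eq_one (hZ01 t ω)) t ω)
  rw [abs_of_nonneg (by positivity)]
  exact div_le_one_of_le₀ (le_add_of_nonneg_left hD) (by positivity)

theorem runningTotal_succ_mul_sub_sum_adaSubIncrement (hp : 0 < p) (hK : 0 < K)
    (hZ01 : ∀ t ω, Z t ω = 0 ∨ Z t ω = 1) (hW0 : ∀ t ω, 0 ≤ W t ω)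
    (hWZ : ∀ t ω, W t ω ≤ Z t ω) (t : ℕ) (ω : Ω) :
    runningTotal p K Z (t + 1) ω * (runningTotal q K W (t + 1) ω / runningTotal p K Z (t + 1) ω
        - ∑ s ∈ range (t + 1), adaSubIncrement p K Z W pf s ω) =
      runningTotal p K Z t ω * (runningTotal q K W t ω / runningTotal p K Z t ω
        - ∑ s ∈ range t, adaSubIncrement p K Z W pf s ω) +
      (runningTotal p K Z (t + 1) ω - runningTotal p K Z t ω) *
        (pf (t + 1) ω - ∑ s ∈ range t, adaSubIncrement p K Z W pf s ω) := by
  have hZ0 := fun t ω => nonneg_of_eq_zero_or_eq_one (hZ01 t ω)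
  have hincr := runningTotal_succ_mul_adaSubIncrement (pf := pf) hp hK hZ01 hW0 hWZ t ω
  rw [mul_sub, mul_sub, mul_div_cancel₀ _ (runningTotal_pos hp hK.le hZ0 (t + 1) ω).ne',
    mul_div_cancel₀ _ (runningTotal_pos hp hK.le hZ0 t ω).ne', sum_range_succ, mul_add, hincr,
    runningTotal_succ (X := W), runningTotal_succ (X := Z)]
  ring

end AdaSub

/-- Key convergence lemma for AdaSub: Fix a variable index `j`. If the
conditional selection success probabilities `p^{(t)} = P(W^{(t)} = 1 | Z^{(t)} = 1, ℱ^{(t-1)})`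
converge almost surely to a random variable `p*`, then the AdaSub selection probabilities
`r^{(t)} = (q + K ∑_{i≤t} W_i)/(p + K ∑_{i≤t} Z_i)` also converge almost surely to `p*`.
Since `W ≤ Z` are `{0,1}`-valued, the conditional success probability is encoded by
`μ[W^{(t+1)} | ℱ_t] = p^{(t+1)} · μ[Z^{(t+1)} | ℱ_t] = p^{(t+1)} · r^{(t)}`. -/
theorem adaSub_key_convergence_lemma {Ω : Type*} {m0 : MeasurableSpace Ω}
    (μ : Measure Ω) [IsProbabilityMeasure μ] (ℱ : Filtration ℕ m0)
    (q p K : ℝ) (hq : 0 < q) (hqp : q < p) (hK : 0 < K)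
    (Z W : ℕ → Ω → ℝ) (pf : ℕ → Ω → ℝ) (pstar : Ω → ℝ)
    (hZ01 : ∀ t ω, Z t ω = 0 ∨ Z t ω = 1)
    (hW01 : ∀ t ω, W t ω = 0 ∨ W t ω = 1)
    (hWZ : ∀ t ω, W t ω ≤ Z t ω)
    (hZadapt : ∀ t, Measurable[ℱ t] (Z t))
    (hWadapt : ∀ t, Measurable[ℱ t] (W t))
    (hZcond : ∀ t : ℕ, (μ[Z (t + 1) | ℱ t]) =ᵐ[μ] fun ω =>
      (q + K * ∑ i ∈ Finset.Icc 1 t, W i ω) / (p + K * ∑ i ∈ Finset.Icc 1 t, Z i ω))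
    (hp01 : ∀ t ω, 0 ≤ pf t ω ∧ pf t ω ≤ 1)
    (hpadapt : ∀ t, Measurable[ℱ t] (pf (t + 1)))
    (hWcond : ∀ t : ℕ, (μ[W (t + 1) | ℱ t]) =ᵐ[μ] fun ω =>
      pf (t + 1) ω *
        ((q + K * ∑ i ∈ Finset.Icc 1 t, W i ω) / (p + K * ∑ i ∈ Finset.Icc 1 t, Z i ω)))
    (hptend : ∀ᵐ ω ∂μ, Tendsto (fun t => pf t ω) atTop (nhds (pstar ω))) :
    ∀ᵐ ω ∂μ, Tendsto
      (fun t => (q + K * ∑ i ∈ Finset.Icc 1 t, W i ω) /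
        (p + K * ∑ i ∈ Finset.Icc 1 t, Z i ω)) atTop (nhds (pstar ω)) := by
  have hp : 0 < p := hq.trans hqp
  have hZ0 : ∀ t ω, 0 ≤ Z t ω := fun t ω => nonneg_of_eq_zero_or_eq_one (hZ01 t ω)
  have hW0 : ∀ t ω, 0 ≤ W t ω := fun t ω => nonneg_of_eq_zero_or_eq_one (hW01 t ω)
  have hD_top := ae_tendsto_runningTotal_atTop hq hp hK hZ0
    (fun t ω => le_one_of_eq_zero_or_eq_one (hZ01 t ω)) hW0 hZadapt hZcond
  have hM_conv := ae_exists_tendsto_sum_range_of_condExp_eq_zero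
    (fun t => (measurable_adaSubIncrement hZadapt hWadapt hpadapt t).stronglyMeasurable)
    (condExp_adaSubIncrement_eq_zero hp.le hK.le hZ01 hW01 hp01 hZadapt hWadapt hpadapt
      hZcond hWcond)
    (sum_range_adaSubIncrement_sq_le hp hK hZ01 hW0 hWZ hp01)
  filter_upwards [hD_top, hM_conv, hptend] with ω hD ⟨c, hM⟩ hpf
  have hr_sub_M := tendsto_of_mul_succ_eq_mul_add (monotone_runningTotal hK.le hZ0 ω) hD
    (u := fun t => runningTotal q K W t ω / runningTotal p K Z t ω
      - ∑ s ∈ range t, adaSubIncrement p K Z W pf s ω)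
    (runningTotal_succ_mul_sub_sum_adaSubIncrement hp hK hZ01 hW0 hWZ · ω)
    ((hpf.comp (tendsto_add_atTop_nat 1)).sub hM)
  simpa [runningTotal] using hr_sub_M.add hM
end

section
/- Let j be a variable satisfying the finite-sample PF property (j ∈ f_C(V) whenever j ∈ V). Then in AdaSub the waiting times between successive considerations of j satisfy T_j^{(i+1)} − T_j^{(i)} ~ Geometric((q + Ki)/(p + Ki)), and consequently E[T_j^{(m)}] = ∑_{i=0}^{m-1} (p + Ki)/(q + Ki). -/
open MeasureTheory Filter Function

open scoped ENNReal

/-!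
Write `N t = ∑_{l ≤ t} Z l` for the number of selections up to time `t` and `ρ i` for the
selection probability after `i` selections. The event that the `i`-th selection happens at
time `t` lies in `ℱ t` and fixes `N t = i`, so by the tower property the count then stays at `i`
for `k` steps and jumps at the next one with probability `ρ i * (1 - ρ i) ^ k`, whatever `t` is.
Summing over `t` gives the geometric law of the `i`-th waiting time as soon as the `i`-th
selection happens almost surely; since the geometric weights sum to one, the `(i + 1)`-st
selection then happens almost surely as well, which drives an induction on `i`. The expectation
of `T^{(m)}` is the sum of the geometric means `1 / ρ i`.
-/

lemma hasSum_mul_geometric {r : ℝ} (h₀ : 0 < r) (h₁ : r ≤ 1) :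
    HasSum (fun k : ℕ => r * (1 - r) ^ k) 1 := by
  have := (hasSum_geometric_of_lt_one (sub_nonneg.2 h₁) (sub_lt_self 1 h₀)).mul_left r
  rwa [sub_sub_cancel, mul_inv_cancel₀ h₀.ne'] at this

lemma hasSum_succ_mul_mul_geometric {r : ℝ} (h₀ : 0 < r) (h₁ : r ≤ 1) :
    HasSum (fun k : ℕ => (k + 1) * (r * (1 - r) ^ k)) r⁻¹ := by
  have hnorm : ‖1 - r‖ < 1 := by rw [Real.norm_eq_abs, abs_lt]; constructor <;> linarith
  have := ((hasSum_coe_mul_geometric_of_norm_lt_one hnorm).add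
    (hasSum_geometric_of_norm_lt_one hnorm)).mul_left r
  have hval : r * ((1 - r) / (1 - (1 - r)) ^ 2 + (1 - (1 - r))⁻¹) = r⁻¹ := by
    rw [sub_sub_cancel]; field_simp; ring
  rw [hval] at this
  have hterm : (fun k : ℕ => r * (k * (1 - r) ^ k + (1 - r) ^ k)) =
      fun k : ℕ => (k + 1) * (r * (1 - r) ^ k) := by
    funext k; ring
  rwa [hterm] at this

lemma tsum_ofReal_mul_geometric {r : ℝ} (h₀ : 0 < r) (h₁ : r ≤ 1) :
    ∑' k : ℕ, ENNReal.ofReal (r * (1 - r) ^ k) = 1 := by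
  have hnn (k : ℕ) : 0 ≤ r * (1 - r) ^ k := by have := sub_nonneg.2 h₁; positivity
  rw [← ENNReal.ofReal_tsum_of_nonneg hnn (hasSum_mul_geometric h₀ h₁).summable,
    (hasSum_mul_geometric h₀ h₁).tsum_eq, ENNReal.ofReal_one]

lemma tsum_succ_mul_ofReal_mul_geometric {r : ℝ} (h₀ : 0 < r) (h₁ : r ≤ 1) :
    ∑' k : ℕ, ((k + 1 : ℕ) : ℝ≥0∞) * ENNReal.ofReal (r * (1 - r) ^ k) = ENNReal.ofReal r⁻¹ := by
  have hnn (k : ℕ) : 0 ≤ (k + 1) * (r * (1 - r) ^ k) := by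
    have := sub_nonneg.2 h₁; positivity
  have h := hasSum_succ_mul_mul_geometric h₀ h₁
  rw [← h.tsum_eq, ENNReal.ofReal_tsum_of_nonneg hnn h.summable]
  refine tsum_congr fun k => ?_
  rw [ENNReal.ofReal_mul (by positivity : (0 : ℝ) ≤ k + 1), ← Nat.cast_add_one,
    ENNReal.ofReal_natCast]

lemma lintegral_natCast_eq_tsum {α : Type*} [MeasurableSpace α] {μ : Measure α} {g : α → ℕ}
    (hg : Measurable g) :
    ∫⁻ a, (g a : ℝ≥0∞) ∂μ = ∑' n : ℕ, n * μ (g ⁻¹' {n}) := by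
  rw [← lintegral_map measurable_from_nat hg, lintegral_countable']
  simp_rw [Measure.map_apply hg (measurableSet_singleton _)]

namespace AdaSub

variable {Ω : Type*} {m0 : MeasurableSpace Ω} {Z : ℕ → Ω → ℝ}

noncomputable def successCount (Z : ℕ → Ω → ℝ) (t : ℕ) (ω : Ω) : ℝ :=
  ∑ l ∈ Finset.Icc 1 t, Z l ω

-- `sInf ∅ = 0`: this is `0` when the count never reaches `i`, a null event (`measure_reached`).
noncomputable def successTime (Z : ℕ → Ω → ℝ) (i : ℕ) (ω : Ω) : ℕ :=
  sInf {t | successCount Z t ω = i}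

noncomputable def waitingTime (Z : ℕ → Ω → ℝ) (i : ℕ) (ω : Ω) : ℕ :=
  successTime Z (i + 1) ω - successTime Z i ω

-- The `i`-th selection happens at time `t`; by convention the `0`-th one happens at time `0`.
def successAt (Z : ℕ → Ω → ℝ) (i t : ℕ) : Set Ω :=
  {ω | successCount Z t ω = i ∧ (Z t ω = 1 ∨ t = 0)}

def reached (Z : ℕ → Ω → ℝ) (i : ℕ) : Set Ω :=
  ⋃ t, successAt Z i t

@[simp]
lemma successCount_zero (ω : Ω) : successCount Z 0 ω = 0 := by
  simp [successCount]

lemma successCount_succ (t : ℕ) (ω : Ω) :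
    successCount Z (t + 1) ω = successCount Z t ω + Z (t + 1) ω :=
  Finset.sum_Icc_succ_top (by omega) _

lemma successTime_zero (ω : Ω) : successTime Z 0 ω = 0 :=
  Nat.sInf_eq_zero.mpr (Or.inl (by simp))

lemma exists_successCount_eq_of_successTime_ne_zero {i : ℕ} {ω : Ω}
    (h : successTime Z i ω ≠ 0) : ∃ s, successCount Z s ω = i := by
  by_contra! hne
  exact h (Nat.sInf_eq_zero.mpr (Or.inr (Set.eq_empty_of_forall_notMem hne)))

lemma successAt_inter_successAt_succ (i t k : ℕ) :
    successAt Z i t ∩ successAt Z (i + 1) (t + k + 1) =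
      (successAt Z i t ∩ {ω | successCount Z (t + k) ω = i}) ∩ {ω | Z (t + k + 1) ω = 1} := by
  ext ω
  simp only [successAt, Set.mem_inter_iff, Set.mem_ofPred_eq, successCount_succ,
    Nat.add_one_ne_zero, or_false, Nat.cast_succ]
  constructor
  · rintro ⟨hi, hN, hZ⟩
    exact ⟨⟨hi, by rw [hZ] at hN; linarith⟩, hZ⟩
  · rintro ⟨⟨hi, hN⟩, hZ⟩
    exact ⟨hi, by rw [hN, hZ], hZ⟩

section ZeroOne

variable (h01 : ∀ t ω, Z t ω = 0 ∨ Z t ω = 1)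
include h01

lemma successCount_monotone (ω : Ω) : Monotone (successCount Z · ω) :=
  monotone_nat_of_le_succ fun t => by
    rcases h01 (t + 1) ω with h | h <;> simp [successCount_succ, h]

lemma exists_lt_successCount_eq {i t : ℕ} {ω : Ω} (h : successCount Z t ω = i + 1) :
    ∃ u < t, successCount Z u ω = i := by
  induction t with
  | zero => simp at h; linarith [(Nat.cast_nonneg i : (0 : ℝ) ≤ i)]
  | succ t ih =>
    rw [successCount_succ] at h
    rcases h01 (t + 1) ω with hz | hz
    · obtain ⟨u, hut, hu⟩ := ih (by simpa [hz] using h)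
      exact ⟨u, by omega, hu⟩
    · exact ⟨t, by omega, by rw [hz] at h; linarith⟩

lemma successTime_eq_of_mem_successAt {i t : ℕ} {ω : Ω} (hω : ω ∈ successAt Z i t) :
    successTime Z i ω = t := by
  obtain ⟨hN, hZ⟩ := hω
  refine le_antisymm (Nat.sInf_le hN) (le_csInf ⟨t, hN⟩ fun s hs => ?_)
  by_contra! hst
  obtain ⟨u, rfl⟩ : ∃ u, t = u + 1 := ⟨t - 1, by omega⟩
  have hle := successCount_monotone h01 ω (show s ≤ u by omega)
  rw [successCount_succ, hZ.resolve_right (by omega)] at hN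
  simp only [Set.mem_ofPred_eq] at hs
  simp only at hle
  linarith

lemma mem_successAt_successTime {i : ℕ} {ω : Ω} (h : ∃ s, successCount Z s ω = i) :
    ω ∈ successAt Z i (successTime Z i ω) := by
  have hmem : successCount Z (successTime Z i ω) ω = i := Nat.sInf_mem h
  refine ⟨hmem, ?_⟩
  cases hT : successTime Z i ω with
  | zero => exact Or.inr rfl
  | succ u =>
    have hu : successCount Z u ω ≠ i := Nat.notMem_of_lt_sInf (s := {t | successCount Z t ω = i})
      (by unfold successTime at hT; omega)
    rw [hT, successCount_succ] at hmem
    exact Or.inl ((h01 (u + 1) ω).resolve_left fun hz => hu (by rwa [hz, add_zero] at hmem))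

lemma successTime_lt_successTime_succ {i : ℕ} {ω : Ω} (hω : ω ∈ reached Z (i + 1)) :
    successTime Z i ω < successTime Z (i + 1) ω := by
  obtain ⟨s, hs⟩ := Set.mem_iUnion.mp hω
  obtain ⟨u, hus, hu⟩ := exists_lt_successCount_eq h01 (i := i) (by exact_mod_cast hs.1)
  rw [successTime_eq_of_mem_successAt h01 hs]
  exact (Nat.sInf_le hu).trans_lt hus

lemma pairwise_disjoint_successAt (i : ℕ) : Pairwise (Disjoint on successAt Z i) :=
  fun _ _ hne => Set.disjoint_left.mpr fun _ h h' =>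
    hne ((successTime_eq_of_mem_successAt h01 h).symm.trans
      (successTime_eq_of_mem_successAt h01 h'))

lemma setOf_successTime_eq_succ (i n : ℕ) :
    {ω | successTime Z i ω = n + 1} = successAt Z i (n + 1) := by
  ext ω
  refine ⟨fun h => ?_, successTime_eq_of_mem_successAt h01⟩
  have hT : successTime Z i ω = n + 1 := h
  simpa [hT] using mem_successAt_successTime h01
    (exists_successCount_eq_of_successTime_ne_zero (by omega : successTime Z i ω ≠ 0))

lemma setOf_waitingTime_eq_succ (i k : ℕ) :
    {ω | waitingTime Z i ω = k + 1} =
      ⋃ t, successAt Z i t ∩ successAt Z (i + 1) (t + k + 1) := by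
  ext ω
  simp only [Set.mem_ofPred_eq, Set.mem_iUnion, Set.mem_inter_iff, waitingTime]
  constructor
  · intro h
    obtain ⟨s, hs⟩ :=
      exists_successCount_eq_of_successTime_ne_zero (by omega : successTime Z (i + 1) ω ≠ 0)
    obtain ⟨u, -, hu⟩ := exists_lt_successCount_eq h01 (i := i) (by exact_mod_cast hs)
    refine ⟨successTime Z i ω, mem_successAt_successTime h01 ⟨u, hu⟩, ?_⟩
    rw [show successTime Z i ω + k + 1 = successTime Z (i + 1) ω by omega]
    exact mem_successAt_successTime h01 ⟨s, hs⟩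
  · rintro ⟨t, h, h'⟩
    rw [successTime_eq_of_mem_successAt h01 h, successTime_eq_of_mem_successAt h01 h']
    omega

lemma reached_succ (i : ℕ) : reached Z (i + 1) = ⋃ k, {ω | waitingTime Z i ω = k + 1} := by
  ext ω
  refine ⟨fun hω => Set.mem_iUnion.mpr ⟨waitingTime Z i ω - 1, ?_⟩, fun hω => ?_⟩
  · have := successTime_lt_successTime_succ h01 hω
    simp only [Set.mem_ofPred_eq, waitingTime]
    omega
  · simp only [setOf_waitingTime_eq_succ h01, Set.mem_iUnion] at hω
    obtain ⟨k, t, -, h⟩ := hω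
    exact Set.mem_iUnion.mpr ⟨_, h⟩

end ZeroOne

section Measurability

variable {ℱ : Filtration ℕ m0} (hZ : ∀ t, Measurable[ℱ t] (Z t))
include hZ

lemma measurable_successCount (t : ℕ) : Measurable[ℱ t] (successCount Z t) :=
  Finset.measurable_sum _ fun l hl => (hZ l).mono (ℱ.mono (Finset.mem_Icc.mp hl).2) le_rfl

lemma measurableSet_successAt (i t : ℕ) : MeasurableSet[ℱ t] (successAt Z i t) :=
  (measurable_successCount hZ t (measurableSet_singleton _)).inter
    ((hZ t (measurableSet_singleton _)).union (MeasurableSet.const _))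

lemma measurableSet_successAt_inter_successCount_eq (i t k : ℕ) :
    MeasurableSet[ℱ (t + k)] (successAt Z i t ∩ {ω | successCount Z (t + k) ω = i}) :=
  (ℱ.mono (Nat.le_add_right t k) _ (measurableSet_successAt hZ i t)).inter
    (measurable_successCount hZ _ (measurableSet_singleton _))

lemma measurable_successTime (h01 : ∀ t ω, Z t ω = 0 ∨ Z t ω = 1) (i : ℕ) :
    Measurable (successTime Z i) := by
  have hsucc (n : ℕ) : MeasurableSet (successTime Z i ⁻¹' {n + 1}) := by
    rw [show successTime Z i ⁻¹' {n + 1} = _ from setOf_successTime_eq_succ h01 i n]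
    exact ℱ.le _ _ (measurableSet_successAt hZ i (n + 1))
  refine measurable_to_countable' fun n => ?_
  cases n with
  | succ n => exact hsucc n
  | zero =>
    convert (MeasurableSet.iUnion hsucc).compl using 1
    ext ω
    simp only [Set.mem_preimage, Set.mem_singleton_iff, Set.mem_compl_iff, Set.mem_iUnion,
      not_exists]
    exact ⟨fun h n => by omega,
      fun h => by by_contra h'; exact h _ (Nat.succ_pred_eq_of_ne_zero h').symm⟩

lemma measurable_waitingTime (h01 : ∀ t ω, Z t ω = 0 ∨ Z t ω = 1) (i : ℕ) :
    Measurable (waitingTime Z i) :=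
  (measurable_successTime hZ h01 (i + 1)).sub (measurable_successTime hZ h01 i)

end Measurability

section OneStep

variable {μ : Measure Ω} [IsFiniteMeasure μ] {ℱ : Filtration ℕ m0} {ρ : ℝ → ℝ}
  (h01 : ∀ t ω, Z t ω = 0 ∨ Z t ω = 1) (hZ : ∀ t, Measurable[ℱ t] (Z t))
  (hcond : ∀ t, μ[Z (t + 1) | ℱ t] =ᵐ[μ] fun ω => ρ (successCount Z t ω))
include h01 hZ hcond

lemma measureReal_inter_success {t : ℕ} {c : ℝ} {A : Set Ω} (hA : MeasurableSet[ℱ t] A)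
    (hAc : ∀ ω ∈ A, successCount Z t ω = c) :
    μ.real (A ∩ {ω | Z (t + 1) ω = 1}) = ρ c * μ.real A := by
  set S := {ω | Z (t + 1) ω = 1}
  have hS : MeasurableSet S := ℱ.le _ _ (hZ (t + 1) (measurableSet_singleton 1))
  have hZS : Z (t + 1) = S.indicator 1 := by
    funext ω
    rcases h01 (t + 1) ω with h | h <;> simp [S, h]
  calc μ.real (A ∩ S) = ∫ ω in A, Z (t + 1) ω ∂μ := by
        rw [hZS, setIntegral_indicator hS]; simp
    _ = ∫ ω in A, (μ[Z (t + 1) | ℱ t]) ω ∂μ := by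
        rw [setIntegral_condExp (ℱ.le t) (hZS ▸ (integrable_const 1).indicator hS) hA]
    _ = ∫ _ in A, ρ c ∂μ :=
        setIntegral_congr_ae (ℱ.le t _ hA)
          ((hcond t).mono fun ω h hω => h.trans (congrArg ρ (hAc ω hω)))
    _ = ρ c * μ.real A := by simp [mul_comm]

lemma measureReal_inter_failure {t : ℕ} {c : ℝ} {A : Set Ω} (hA : MeasurableSet[ℱ t] A)
    (hAc : ∀ ω ∈ A, successCount Z t ω = c) :
    μ.real (A ∩ {ω | Z (t + 1) ω = 0}) = (1 - ρ c) * μ.real A := by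
  have hcompl : A ∩ {ω | Z (t + 1) ω = 0} = A \ {ω | Z (t + 1) ω = 1} := by
    ext ω
    rcases h01 (t + 1) ω with h | h <;> simp [h]
  have hsplit : μ.real (A ∩ {ω | Z (t + 1) ω = 1}) + μ.real (A \ {ω | Z (t + 1) ω = 1}) =
      μ.real A :=
    measureReal_inter_add_sdiff (ℱ.le _ _ (hZ (t + 1) (measurableSet_singleton 1)))
  rw [measureReal_inter_success h01 hZ hcond hA hAc] at hsplit
  rw [hcompl]
  linarith

lemma measureReal_successAt_inter_successCount_eq (i t k : ℕ) :
    μ.real (successAt Z i t ∩ {ω | successCount Z (t + k) ω = i}) =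
      (1 - ρ i) ^ k * μ.real (successAt Z i t) := by
  induction k with
  | zero =>
    rw [Set.inter_eq_left.mpr fun ω hω => hω.1, pow_zero, one_mul]
  | succ k ih =>
    have hstay : successAt Z i t ∩ {ω | successCount Z (t + (k + 1)) ω = i} =
        (successAt Z i t ∩ {ω | successCount Z (t + k) ω = i}) ∩ {ω | Z (t + k + 1) ω = 0} := by
      ext ω
      simp only [Set.mem_inter_iff, Set.mem_ofPred_eq, ← add_assoc, successCount_succ]
      refine ⟨fun ⟨hω, hN⟩ => ?_, fun ⟨⟨hω, hN⟩, hz⟩ => ⟨hω, by rw [hN, hz, add_zero]⟩⟩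
      have hle : (i : ℝ) ≤ successCount Z (t + k) ω :=
        hω.1 ▸ successCount_monotone h01 ω (Nat.le_add_right t k)
      rcases h01 (t + k + 1) ω with hz | hz <;> rw [hz] at hN ⊢
      · exact ⟨⟨hω, by linarith⟩, rfl⟩
      · linarith
    rw [hstay, measureReal_inter_failure h01 hZ hcond
      (measurableSet_successAt_inter_successCount_eq hZ i t k) fun ω hω => hω.2, ih]
    ring

lemma measure_successAt_inter_successAt_succ {i : ℕ} (h₀ : 0 ≤ ρ i) (h₁ : ρ i ≤ 1) (t k : ℕ) :
    μ (successAt Z i t ∩ successAt Z (i + 1) (t + k + 1)) =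
      ENNReal.ofReal (ρ i * (1 - ρ i) ^ k) * μ (successAt Z i t) := by
  have hnn : 0 ≤ ρ i * (1 - ρ i) ^ k := by have := sub_nonneg.2 h₁; positivity
  rw [← ofReal_measureReal, ← ofReal_measureReal, ← ENNReal.ofReal_mul hnn,
    successAt_inter_successAt_succ, measureReal_inter_success h01 hZ hcond
      (measurableSet_successAt_inter_successCount_eq hZ i t k) fun ω hω => hω.2,
    measureReal_successAt_inter_successCount_eq h01 hZ hcond, mul_assoc]

lemma measure_waitingTime_eq_succ_mul {i : ℕ} (h₀ : 0 ≤ ρ i) (h₁ : ρ i ≤ 1) (k : ℕ) :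
    μ {ω | waitingTime Z i ω = k + 1} =
      ENNReal.ofReal (ρ i * (1 - ρ i) ^ k) * μ (reached Z i) := by
  have hmeas (j t : ℕ) : MeasurableSet (successAt Z j t) :=
    ℱ.le t _ (measurableSet_successAt hZ j t)
  have hdisj : Pairwise (Disjoint on fun t => successAt Z i t ∩ successAt Z (i + 1) (t + k + 1)) :=
    (pairwise_disjoint_successAt h01 i).mono fun _ _ h =>
      h.mono Set.inter_subset_left Set.inter_subset_left
  rw [setOf_waitingTime_eq_succ h01, measure_iUnion hdisj fun t => (hmeas _ _).inter (hmeas _ _),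
    reached, measure_iUnion (pairwise_disjoint_successAt h01 i) (hmeas i), ← ENNReal.tsum_mul_left]
  exact tsum_congr fun t => measure_successAt_inter_successAt_succ h01 hZ hcond h₀ h₁ t k

end OneStep

section Probability

variable {μ : Measure Ω} [IsProbabilityMeasure μ] {ℱ : Filtration ℕ m0} {ρ : ℝ → ℝ}
  (h01 : ∀ t ω, Z t ω = 0 ∨ Z t ω = 1) (hZ : ∀ t, Measurable[ℱ t] (Z t))
  (hcond : ∀ t, μ[Z (t + 1) | ℱ t] =ᵐ[μ] fun ω => ρ (successCount Z t ω))
  (hρ₀ : ∀ i : ℕ, 0 < ρ i) (hρ₁ : ∀ i : ℕ, ρ i ≤ 1)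
include h01 hZ hcond hρ₀ hρ₁

lemma measure_reached (i : ℕ) : μ (reached Z i) = 1 := by
  induction i with
  | zero =>
    have huniv : reached Z 0 = Set.univ :=
      Set.eq_univ_of_forall fun ω => Set.mem_iUnion.mpr ⟨0, by simp [successAt]⟩
    rw [huniv, measure_univ]
  | succ i ih =>
    have hdisj : Pairwise (Disjoint on fun k : ℕ => {ω | waitingTime Z i ω = k + 1}) :=
      fun k k' hne => Set.disjoint_left.mpr fun ω h h' => hne (by simp_all)
    rw [reached_succ h01, measure_iUnion hdisj fun k =>
      measurable_waitingTime hZ h01 i (measurableSet_singleton _)]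
    simp_rw [measure_waitingTime_eq_succ_mul h01 hZ hcond (hρ₀ i).le (hρ₁ i), ih, mul_one]
    exact tsum_ofReal_mul_geometric (hρ₀ i) (hρ₁ i)

lemma measure_waitingTime_eq_succ (i k : ℕ) :
    μ {ω | waitingTime Z i ω = k + 1} = ENNReal.ofReal (ρ i * (1 - ρ i) ^ k) := by
  rw [measure_waitingTime_eq_succ_mul h01 hZ hcond (hρ₀ i).le (hρ₁ i),
    measure_reached h01 hZ hcond hρ₀ hρ₁, mul_one]

lemma lintegral_waitingTime (i : ℕ) :
    ∫⁻ ω, (waitingTime Z i ω : ℝ≥0∞) ∂μ = ENNReal.ofReal (ρ i)⁻¹ := by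
  rw [lintegral_natCast_eq_tsum (measurable_waitingTime hZ h01 i),
    tsum_eq_zero_add' ENNReal.summable,
    Nat.cast_zero, zero_mul, zero_add, ← tsum_succ_mul_ofReal_mul_geometric (hρ₀ i) (hρ₁ i)]
  exact tsum_congr fun k => congrArg _ (measure_waitingTime_eq_succ h01 hZ hcond hρ₀ hρ₁ i k)

lemma successTime_succ_ae_eq (i : ℕ) :
    ∀ᵐ ω ∂μ, successTime Z (i + 1) ω = successTime Z i ω + waitingTime Z i ω := by
  have hmeas : MeasurableSet (reached Z (i + 1)) :=
    MeasurableSet.iUnion fun t => ℱ.le t _ (measurableSet_successAt hZ (i + 1) t)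
  have hae : ∀ᵐ ω ∂μ, ω ∈ reached Z (i + 1) := by
    rw [ae_mem_iff_measure_eq hmeas.nullMeasurableSet, measure_univ,
      measure_reached h01 hZ hcond hρ₀ hρ₁]
  filter_upwards [hae] with ω hω
  have := successTime_lt_successTime_succ h01 hω
  unfold waitingTime
  omega

lemma lintegral_successTime (m : ℕ) :
    ∫⁻ ω, (successTime Z m ω : ℝ≥0∞) ∂μ = ∑ i ∈ Finset.range m, ENNReal.ofReal (ρ i)⁻¹ := by
  induction m with
  | zero => simp [successTime_zero]
  | succ m ih =>
    have hmeas : Measurable fun ω => (successTime Z m ω : ℝ≥0∞) :=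
      measurable_from_nat.comp (measurable_successTime hZ h01 m)
    rw [lintegral_congr_ae ((successTime_succ_ae_eq h01 hZ hcond hρ₀ hρ₁ m).mono fun ω h => by
        rw [h, Nat.cast_add]),
      lintegral_add_left hmeas, ih,
      lintegral_waitingTime h01 hZ hcond hρ₀ hρ₁, Finset.sum_range_succ]

lemma integral_successTime (m : ℕ) :
    ∫ ω, (successTime Z m ω : ℝ) ∂μ = ∑ i ∈ Finset.range m, (ρ i)⁻¹ := by
  rw [integral_eq_lintegral_of_nonneg_ae (ae_of_all _ fun ω => Nat.cast_nonneg _)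
    (measurable_from_nat.comp (measurable_successTime hZ h01 m)).aestronglyMeasurable]
  simp_rw [ENNReal.ofReal_natCast]
  rw [lintegral_successTime h01 hZ hcond hρ₀ hρ₁,
    ENNReal.toReal_sum fun _ _ => ENNReal.ofReal_ne_top]
  exact Finset.sum_congr rfl fun i _ => ENNReal.toReal_ofReal (inv_nonneg.2 (hρ₀ i).le)

end Probability

end AdaSub

/-- Let `j` satisfy the finite-sample PF property, so that every
consideration of `j` results in selection and the inclusion indicators `Z^{(t)}` of `j`
satisfy `P(Z^{(t+1)} = 1 | ℱ_t) = (q + K i)/(p + K i)` after `i` considerations. Then the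
waiting times between successive considerations satisfy
`T_j^{(i+1)} − T_j^{(i)} ~ Geometric((q + Ki)/(p + Ki))` and consequently
`E[T_j^{(m)}] = ∑_{i=0}^{m-1} (p + Ki)/(q + Ki)`, where
`T_j^{(m)} = min{t : ∑_{l ≤ t} Z^{(l)} = m}`. -/
theorem adaSub_waiting_times_PF {Ω : Type*} {m0 : MeasurableSpace Ω}
    (μ : Measure Ω) [IsProbabilityMeasure μ] (ℱ : Filtration ℕ m0)
    (q p K : ℝ) (hq : 0 < q) (hqp : q < p) (hK : 0 < K)
    (Z : ℕ → Ω → ℝ)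
    (hZ01 : ∀ t ω, Z t ω = 0 ∨ Z t ω = 1)
    (hZadapt : ∀ t, Measurable[ℱ t] (Z t))
    (hcond : ∀ t : ℕ, (μ[Z (t + 1) | ℱ t]) =ᵐ[μ] fun ω =>
      (q + K * ∑ i ∈ Finset.Icc 1 t, Z i ω) / (p + K * ∑ i ∈ Finset.Icc 1 t, Z i ω)) :
    (∀ i : ℕ, ∀ k : ℕ, 1 ≤ k →
      μ {ω | sInf {t : ℕ | ∑ l ∈ Finset.Icc 1 t, Z l ω = ((i : ℝ) + 1)} -
             sInf {t : ℕ | ∑ l ∈ Finset.Icc 1 t, Z l ω = (i : ℝ)} = k}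
        = ENNReal.ofReal ((q + K * i) / (p + K * i) *
            (1 - (q + K * i) / (p + K * i)) ^ (k - 1))) ∧
    (∀ m : ℕ,
      ∫ ω, ((sInf {t : ℕ | ∑ l ∈ Finset.Icc 1 t, Z l ω = (m : ℝ)} : ℕ) : ℝ) ∂μ
        = ∑ i ∈ Finset.range m, (p + K * i) / (q + K * i)) := by
  set ρ : ℝ → ℝ := fun x => (q + K * x) / (p + K * x)
  have hp : 0 < p := hq.trans hqp
  have hρ₀ (i : ℕ) : 0 < ρ i := by positivity
  have hρ₁ (i : ℕ) : ρ i ≤ 1 := div_le_one_of_le₀ (by linarith) (by positivity)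
  refine ⟨fun i k hk => ?_, fun m => ?_⟩
  · obtain ⟨k, rfl⟩ := Nat.exists_eq_add_of_le' hk
    simpa only [AdaSub.waitingTime, AdaSub.successTime, AdaSub.successCount, Nat.cast_add_one,
      add_tsub_cancel_right] using
      AdaSub.measure_waitingTime_eq_succ hZ01 hZadapt hcond hρ₀ hρ₁ i k
  · simpa only [ρ, inv_div, AdaSub.successTime, AdaSub.successCount] using
      AdaSub.integral_successTime hZ01 hZadapt hcond hρ₀ hρ₁ m
end

section
/- Under the finite-sample PF property for all variables in S*, the expected number of AdaSub iterations until the thresholded model with threshold ρ contains all of S* satisfies E[max_{j∈S*} T_j^{(i(ρ))}] ≤ s* · ∑_{i=0}^{i(ρ)−1} (p + Ki)/(q + Ki), where i(ρ) = ⌊(ρp − q)/(K(1−ρ)) + 1⌋. -/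
/-!
Let `c_t` count the considerations of a variable among the first `t` iterations. While `c_t = i`,
the next iteration is a consideration with conditional probability `(q + K i) / (p + K i)`, and `c`
leaves level `i` at most once; hence the expected number of iterations spent at level `i` is at
most `(p + K i) / (q + K i)`. The `m`-th consideration time is at most the number of iterations
spent at levels below `m`, and the maximum over `S*` is at most the sum over `S*`.
-/

open MeasureTheory Filter

namespace AdaSub

theorem min_sInf_le_card_filter_lt {c : ℕ → ℕ} (hc : Monotone c) (m n : ℕ) :
    min (sInf {t | c t = m}) n ≤ ((Finset.range n).filter fun t => c t < m).card := by
  rw [← Finset.card_range (min _ n)]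
  refine Finset.card_le_card fun t ht => ?_
  have ht' : t < sInf {t | c t = m} ∧ t < n := by simpa using ht
  have hne : {t | c t = m}.Nonempty := by
    by_contra h
    simp [Set.not_nonempty_iff_eq_empty.1 h] at ht'
  have hle : c t ≤ m := (hc ht'.1.le).trans_eq (Nat.sInf_mem hne)
  have hne' : c t ≠ m := Nat.notMem_of_lt_sInf (s := {t | c t = m}) ht'.1
  simp only [Finset.mem_filter, Finset.mem_range]
  omega

theorem card_filter_eq_lt_succ_le_one {c : ℕ → ℕ} (hc : Monotone c) (i n : ℕ) :
    ((Finset.range n).filter fun t => c t = i ∧ i < c (t + 1)).card ≤ 1 := by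
  refine Finset.card_le_one.2 fun a ha b hb => ?_
  simp only [Finset.mem_filter] at ha hb
  have no_return : ∀ {x y}, i < c (x + 1) → c y = i → ¬ x < y :=
    fun hx hy hxy => (hc (Nat.succ_le_of_lt hxy)).not_gt (hy ▸ hx)
  exact le_antisymm (not_lt.1 (no_return hb.2.2 ha.2.1)) (not_lt.1 (no_return ha.2.2 hb.2.1))

section Counting

variable {Ω : Type*}

/-- The paper's `T^{(m)}`; it is `0` (the value of `sInf ∅`) when the count never reaches `m`. -/
noncomputable def considerationTime (Z : ℕ → Ω → ℝ) (m : ℕ) (ω : Ω) : ℕ :=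
  sInf {t : ℕ | ∑ l ∈ Finset.Icc 1 t, Z l ω = m}

noncomputable def considerationCount (Z : ℕ → Ω → ℝ) (t : ℕ) (ω : Ω) : ℕ :=
  ((Finset.Icc 1 t).filter fun l => Z l ω = 1).card

variable {Z : ℕ → Ω → ℝ} {ω : Ω}

theorem sum_Icc_eq_considerationCount (hZ : ∀ l, Z l ω = 0 ∨ Z l ω = 1) (t : ℕ) :
    ∑ l ∈ Finset.Icc 1 t, Z l ω = considerationCount Z t ω := by
  rw [considerationCount, Finset.card_filter, Nat.cast_sum]
  refine Finset.sum_congr rfl fun l _ => ?_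
  rcases hZ l with h | h <;> simp [h]

theorem considerationTime_eq_sInf_considerationCount (hZ : ∀ l, Z l ω = 0 ∨ Z l ω = 1)
    (m : ℕ) : considerationTime Z m ω = sInf {t | considerationCount Z t ω = m} := by
  simp only [considerationTime, sum_Icc_eq_considerationCount hZ, Nat.cast_inj]

theorem monotone_considerationCount : Monotone fun t => considerationCount Z t ω :=
  fun _ _ hst => Finset.card_le_card
    (Finset.filter_subset_filter _ (Finset.Icc_subset_Icc_right hst))

theorem considerationCount_succ (t : ℕ) :
    considerationCount Z (t + 1) ω =
      considerationCount Z t ω + if Z (t + 1) ω = 1 then 1 else 0 := by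
  simp only [considerationCount, Finset.card_filter]
  exact Finset.sum_Icc_succ_top (by omega) _

theorem sum_indicator_considerationCount_preimage_le_one (hZ : ∀ l, Z l ω = 0 ∨ Z l ω = 1)
    (i n : ℕ) :
    ∑ t ∈ Finset.range n, (considerationCount Z t ⁻¹' {i}).indicator (Z (t + 1)) ω ≤ 1 := by
  classical
  have hleaves : ∀ t, (considerationCount Z t ⁻¹' {i}).indicator (Z (t + 1)) ω =
      if considerationCount Z t ω = i ∧ i < considerationCount Z (t + 1) ω then 1 else 0 := by
    intro t
    rw [Set.indicator_apply, considerationCount_succ]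
    rcases hZ (t + 1) with h | h <;> by_cases hi : considerationCount Z t ω = i <;> simp [h, hi]
  simp only [hleaves, Finset.sum_boole]
  exact_mod_cast card_filter_eq_lt_succ_le_one
    (monotone_considerationCount (Z := Z) (ω := ω)) i n

end Counting

theorem measurable_sInf_setOf_mem {Ω : Type*} [MeasurableSpace Ω] {A : ℕ → Set Ω}
    (hA : ∀ t, MeasurableSet (A t)) : Measurable fun ω => sInf {t | ω ∈ A t} := by
  refine measurable_of_Iic fun k => ?_
  have hpre : (fun ω => sInf {t | ω ∈ A t}) ⁻¹' Set.Iic k = (⋃ t ≤ k, A t) ∪ ⋂ t, (A t)ᶜ := by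
    ext ω
    simp only [Set.mem_preimage, Set.mem_Iic, Set.mem_union, Set.mem_iUnion, Set.mem_iInter,
      Set.mem_compl_iff, exists_prop]
    constructor
    · intro h
      by_cases hne : {t | ω ∈ A t}.Nonempty
      · exact Or.inl ⟨_, h, Nat.sInf_mem hne⟩
      · exact Or.inr fun t ht => hne ⟨t, ht⟩
    · rintro (⟨t, htk, ht⟩ | h)
      · exact (Nat.sInf_le ht).trans htk
      · simp [h]
  rw [hpre]
  exact (MeasurableSet.biUnion (Set.to_countable _) fun t _ => hA t).union
    (MeasurableSet.iInter fun t => (hA t).compl)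

theorem measurable_considerationCount {Ω : Type*} {m : MeasurableSpace Ω} {Z : ℕ → Ω → ℝ}
    {t : ℕ} (hZ : ∀ l ≤ t, Measurable (Z l)) : Measurable (considerationCount Z t) := by
  have hsum : considerationCount Z t = fun ω => ∑ l ∈ Finset.Icc 1 t, if Z l ω = 1 then 1 else 0 :=
    funext fun ω => Finset.card_filter _ _
  rw [hsum]
  exact Finset.measurable_sum _ fun l hl => Measurable.ite
    (hZ l (Finset.mem_Icc.1 hl).2 (measurableSet_singleton 1)) measurable_const measurable_const

theorem measurable_considerationTime {Ω : Type*} [MeasurableSpace Ω] {Z : ℕ → Ω → ℝ}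
    (hZ : ∀ t, Measurable (Z t)) (m : ℕ) : Measurable (considerationTime Z m) :=
  measurable_sInf_setOf_mem fun _ =>
    Finset.measurable_sum _ (fun l _ => hZ l) (measurableSet_singleton _)

section Integration

variable {Ω : Type*} {m0 : MeasurableSpace Ω} {μ : Measure Ω}

theorem integrable_and_integral_le_of_integral_min_le [IsFiniteMeasure μ] {T : Ω → ℕ}
    (hT : Measurable T) {B : ℝ} (hB : ∀ n : ℕ, ∫ ω, ((min (T ω) n : ℕ) : ℝ) ∂μ ≤ B) :
    Integrable (fun ω => (T ω : ℝ)) μ ∧ ∫ ω, (T ω : ℝ) ∂μ ≤ B := by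
  have hmeas : ∀ n : ℕ, Measurable fun ω => ((min (T ω) n : ℕ) : ℝ) :=
    fun n => measurable_from_top.comp (hT.min measurable_const)
  have hint : ∀ n : ℕ, Integrable (fun ω => ((min (T ω) n : ℕ) : ℝ)) μ := fun n =>
    .of_bound (hmeas n).aestronglyMeasurable n
      (Eventually.of_forall fun ω => by
        rw [Real.norm_natCast]; exact_mod_cast min_le_right _ _)
  have hiSup : ∀ ω, ENNReal.ofReal (T ω) = ⨆ n : ℕ, ENNReal.ofReal ((min (T ω) n : ℕ) : ℝ) :=
    fun ω => le_antisymm (le_iSup_of_le (T ω) (by simp))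
      (iSup_le fun n => ENNReal.ofReal_le_ofReal (by exact_mod_cast min_le_left _ _))
  have hlintegral : ∫⁻ ω, ENNReal.ofReal (T ω) ∂μ ≤ ENNReal.ofReal B := by
    simp_rw [hiSup]
    rw [lintegral_iSup (fun n => (hmeas n).ennreal_ofReal)
      fun a b hab ω => ENNReal.ofReal_le_ofReal (by gcongr)]
    refine iSup_le fun n => ?_
    rw [← ofReal_integral_eq_lintegral_ofReal (hint n) (Eventually.of_forall fun _ => by simp)]
    exact ENNReal.ofReal_le_ofReal (hB n)
  have hnonneg : 0 ≤ᵐ[μ] fun ω => (T ω : ℝ) := Eventually.of_forall fun _ => by simp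
  have hTmeas : AEStronglyMeasurable (fun ω => (T ω : ℝ)) μ :=
    (measurable_from_top.comp hT).aestronglyMeasurable
  refine ⟨⟨hTmeas, (hasFiniteIntegral_iff_ofReal hnonneg).2
    (hlintegral.trans_lt ENNReal.ofReal_lt_top)⟩, ?_⟩
  rw [integral_eq_lintegral_of_nonneg_ae hnonneg hTmeas]
  exact ENNReal.toReal_le_of_le_ofReal ((integral_nonneg fun _ => by simp).trans (hB 0))
    hlintegral

theorem integral_finset_sup_le_sum {ι : Type*} (S : Finset ι) {f : ι → Ω → ℕ}
    (hf : ∀ j ∈ S, Integrable (fun ω => (f j ω : ℝ)) μ) :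
    ∫ ω, ((S.sup fun j => f j ω : ℕ) : ℝ) ∂μ ≤ ∑ j ∈ S, ∫ ω, (f j ω : ℝ) ∂μ := by
  rw [← integral_finsetSum _ hf]
  refine integral_mono_of_nonneg (Eventually.of_forall fun _ => by simp)
    (integrable_finsetSum _ hf) (Eventually.of_forall fun ω => ?_)
  have hsup : (S.sup fun j => f j ω) ≤ ∑ j ∈ S, f j ω :=
    Finset.sup_le fun j hj =>
      Finset.single_le_sum (f := fun j => f j ω) (fun _ _ => Nat.zero_le _) hj
  dsimp only
  exact_mod_cast hsup

theorem setIntegral_eq_of_condExp_eq_comp {m : MeasurableSpace Ω} (hm : m ≤ m0)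
    [SigmaFinite (μ.trim hm)] {α : Type*} [MeasurableSpace α] [MeasurableSingletonClass α]
    {N : Ω → α} (hN : Measurable[m] N) {f : Ω → ℝ} (hf : Integrable f μ) {r : α → ℝ}
    (hcond : μ[f | m] =ᵐ[μ] fun ω => r (N ω)) (a : α) :
    ∫ ω in N ⁻¹' {a}, f ω ∂μ = r a * μ.real (N ⁻¹' {a}) := by
  have hmeas : MeasurableSet[m] (N ⁻¹' {a}) := hN (measurableSet_singleton a)
  rw [← setIntegral_condExp hm hf hmeas, setIntegral_congr_ae (hm _ hmeas)
    (hcond.mono fun ω hω _ => hω),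
    setIntegral_congr_fun (g := fun _ => r a) (hm _ hmeas) fun _ hω => congrArg r hω,
    setIntegral_const, smul_eq_mul, mul_comm]

end Integration

section Dynamics

variable {Ω : Type*} {m0 : MeasurableSpace Ω}

/-- `Z t = 1` when the variable is considered at iteration `t`; `condExp_succ` is the AdaSub
inclusion probability under the PF property. -/
structure IsConsiderationProcess (μ : Measure Ω) (ℱ : Filtration ℕ m0) (q p K : ℝ)
    (Z : ℕ → Ω → ℝ) : Prop where
  zero_or_one : ∀ t ω, Z t ω = 0 ∨ Z t ω = 1
  measurable : ∀ t, Measurable[ℱ t] (Z t)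
  condExp_succ : ∀ t : ℕ, μ[Z (t + 1) | ℱ t] =ᵐ[μ] fun ω =>
    (q + K * ∑ i ∈ Finset.Icc 1 t, Z i ω) / (p + K * ∑ i ∈ Finset.Icc 1 t, Z i ω)

namespace IsConsiderationProcess

variable {μ : Measure Ω} {ℱ : Filtration ℕ m0} {q p K : ℝ} {Z : ℕ → Ω → ℝ}

theorem integrable [IsFiniteMeasure μ] (hZ : IsConsiderationProcess μ ℱ q p K Z) (t : ℕ) :
    Integrable (Z t) μ :=
  .of_bound ((hZ.measurable t).mono (ℱ.le t) le_rfl).aestronglyMeasurable 1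
    (Eventually.of_forall fun ω => by rcases hZ.zero_or_one t ω with h | h <;> simp [h])

theorem measurable_considerationCount (hZ : IsConsiderationProcess μ ℱ q p K Z) (t : ℕ) :
    Measurable[ℱ t] (considerationCount Z t) :=
  AdaSub.measurable_considerationCount fun l hl => (hZ.measurable l).mono (ℱ.mono hl) le_rfl

theorem measurableSet_considerationCount_preimage (hZ : IsConsiderationProcess μ ℱ q p K Z)
    (t i : ℕ) : MeasurableSet (considerationCount Z t ⁻¹' {i}) :=
  ℱ.le t _ (hZ.measurable_considerationCount t (measurableSet_singleton i))

theorem setIntegral_considerationCount_preimage [IsFiniteMeasure μ]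
    (hZ : IsConsiderationProcess μ ℱ q p K Z) (t i : ℕ) :
    ∫ ω in considerationCount Z t ⁻¹' {i}, Z (t + 1) ω ∂μ =
      (q + K * i) / (p + K * i) * μ.real (considerationCount Z t ⁻¹' {i}) :=
  setIntegral_eq_of_condExp_eq_comp (ℱ.le t) (hZ.measurable_considerationCount t)
    (hZ.integrable _) (r := fun i : ℕ => (q + K * i) / (p + K * i))
    ((hZ.condExp_succ t).trans (Eventually.of_forall fun ω => by
      simp only [sum_Icc_eq_considerationCount (hZ.zero_or_one · ω)])) i

theorem sum_measureReal_considerationCount_preimage_le [IsProbabilityMeasure μ]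
    (hZ : IsConsiderationProcess μ ℱ q p K Z)
    (hq : 0 < q) (hp : 0 < p) (hK : 0 ≤ K) (i n : ℕ) :
    ∑ t ∈ Finset.range n, μ.real (considerationCount Z t ⁻¹' {i}) ≤
      (p + K * i) / (q + K * i) := by
  have hint : ∀ t, Integrable ((considerationCount Z t ⁻¹' {i}).indicator (Z (t + 1))) μ :=
    fun t => (hZ.integrable _).indicator (hZ.measurableSet_considerationCount_preimage t i)
  have hscaled : (q + K * i) / (p + K * i) *
      ∑ t ∈ Finset.range n, μ.real (considerationCount Z t ⁻¹' {i}) ≤ 1 :=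
    calc _ = ∑ t ∈ Finset.range n, ∫ ω in considerationCount Z t ⁻¹' {i}, Z (t + 1) ω ∂μ := by
          simp only [Finset.mul_sum, hZ.setIntegral_considerationCount_preimage]
      _ = ∫ ω, ∑ t ∈ Finset.range n,
          (considerationCount Z t ⁻¹' {i}).indicator (Z (t + 1)) ω ∂μ := by
          rw [integral_finsetSum _ fun t _ => hint t]
          simp only [integral_indicator (hZ.measurableSet_considerationCount_preimage _ i)]
      _ ≤ ∫ _, (1 : ℝ) ∂μ := integral_mono (integrable_finsetSum _ fun t _ => hint t)
          (integrable_const 1)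
          fun ω => sum_indicator_considerationCount_preimage_le_one (hZ.zero_or_one · ω) i n
      _ = 1 := by simp
  have hqi : 0 < q + K * i := by positivity
  have hpi : 0 < p + K * i := by positivity
  rw [div_mul_eq_mul_div, div_le_one hpi] at hscaled
  rw [le_div_iff₀ hqi]
  linarith

theorem integral_min_considerationTime_le [IsProbabilityMeasure μ]
    (hZ : IsConsiderationProcess μ ℱ q p K Z)
    (hq : 0 < q) (hp : 0 < p) (hK : 0 ≤ K) (m n : ℕ) :
    ∫ ω, ((min (considerationTime Z m ω) n : ℕ) : ℝ) ∂μ ≤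
      ∑ i ∈ Finset.range m, (p + K * i) / (q + K * i) := by
  classical
  have hint : ∀ t i, Integrable ((considerationCount Z t ⁻¹' {i}).indicator (1 : Ω → ℝ)) μ :=
    fun t i => (integrable_const 1).indicator (hZ.measurableSet_considerationCount_preimage t i)
  have hlevels : ∀ ω t, ∑ i ∈ Finset.range m,
      (considerationCount Z t ⁻¹' {i}).indicator (1 : Ω → ℝ) ω =
        if considerationCount Z t ω < m then 1 else 0 := fun ω t => by
    simp [Set.indicator_apply, Finset.sum_ite_eq]
  have hvisits : ∀ ω, ((min (considerationTime Z m ω) n : ℕ) : ℝ) ≤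
      ∑ t ∈ Finset.range n, ∑ i ∈ Finset.range m,
        (considerationCount Z t ⁻¹' {i}).indicator (1 : Ω → ℝ) ω := fun ω => by
    simp only [hlevels, Finset.sum_boole,
      considerationTime_eq_sInf_considerationCount (hZ.zero_or_one · ω)]
    exact_mod_cast min_sInf_le_card_filter_lt
      (monotone_considerationCount (Z := Z) (ω := ω)) m n
  calc _ ≤ ∫ ω, ∑ t ∈ Finset.range n, ∑ i ∈ Finset.range m,
        (considerationCount Z t ⁻¹' {i}).indicator (1 : Ω → ℝ) ω ∂μ :=
        integral_mono_of_nonneg (Eventually.of_forall fun _ => by positivity)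
          (integrable_finsetSum _ fun t _ => integrable_finsetSum _ fun i _ => hint t i)
          (Eventually.of_forall hvisits)
    _ = ∑ i ∈ Finset.range m, ∑ t ∈ Finset.range n,
        μ.real (considerationCount Z t ⁻¹' {i}) := by
        rw [integral_finsetSum _ fun t _ => integrable_finsetSum _ fun i _ => hint t i,
          Finset.sum_comm]
        simp only [integral_finsetSum _ fun i _ => hint _ i,
          integral_indicator_one (hZ.measurableSet_considerationCount_preimage _ _)]
    _ ≤ _ := Finset.sum_le_sum fun i _ =>
        hZ.sum_measureReal_considerationCount_preimage_le hq hp hK i n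

theorem integrable_considerationTime_and_integral_le [IsProbabilityMeasure μ]
    (hZ : IsConsiderationProcess μ ℱ q p K Z)
    (hq : 0 < q) (hp : 0 < p) (hK : 0 ≤ K) (m : ℕ) :
    Integrable (fun ω => (considerationTime Z m ω : ℝ)) μ ∧
      ∫ ω, (considerationTime Z m ω : ℝ) ∂μ ≤ ∑ i ∈ Finset.range m, (p + K * i) / (q + K * i) :=
  integrable_and_integral_le_of_integral_min_le
    (measurable_considerationTime (fun t => (hZ.measurable t).mono (ℱ.le t) le_rfl) m)
    (hZ.integral_min_considerationTime_le hq hp hK m)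

end IsConsiderationProcess

end Dynamics

end AdaSub

theorem adaSub_threshold_expectation_bound_general {Ω : Type*} {m0 : MeasurableSpace Ω}
    (μ : Measure Ω) [IsProbabilityMeasure μ] (ℱ : Filtration ℕ m0)
    (q p K ρ : ℝ) (hq : 0 < q) (hqp : q < p) (hK : 0 < K)
    {ι : Type*} (S : Finset ι) (Z : ι → ℕ → Ω → ℝ)
    (hZ01 : ∀ j ∈ S, ∀ t ω, Z j t ω = 0 ∨ Z j t ω = 1)
    (hZadapt : ∀ j ∈ S, ∀ t, Measurable[ℱ t] (Z j t))
    (hcond : ∀ j ∈ S, ∀ t : ℕ, (μ[Z j (t + 1) | ℱ t]) =ᵐ[μ] fun ω =>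
      (q + K * ∑ i ∈ Finset.Icc 1 t, Z j i ω) /
        (p + K * ∑ i ∈ Finset.Icc 1 t, Z j i ω)) :
    ∫ ω, ((S.sup fun j =>
        sInf {t : ℕ | ∑ l ∈ Finset.Icc 1 t, Z j l ω
          = ((⌊(ρ * p - q) / (K * (1 - ρ)) + 1⌋₊ : ℕ) : ℝ)} : ℕ) : ℝ) ∂μ
      ≤ (S.card : ℝ) *
          ∑ i ∈ Finset.range ⌊(ρ * p - q) / (K * (1 - ρ)) + 1⌋₊,
            (p + K * i) / (q + K * i) := by
  set m := ⌊(ρ * p - q) / (K * (1 - ρ)) + 1⌋₊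
  set B := ∑ i ∈ Finset.range m, (p + K * i) / (q + K * i)
  have hT : ∀ j ∈ S, Integrable (fun ω => (AdaSub.considerationTime (Z j) m ω : ℝ)) μ ∧
      ∫ ω, (AdaSub.considerationTime (Z j) m ω : ℝ) ∂μ ≤ B := fun j hj =>
    AdaSub.IsConsiderationProcess.integrable_considerationTime_and_integral_le
      ⟨hZ01 j hj, hZadapt j hj, hcond j hj⟩ hq (hq.trans hqp) hK.le m
  calc _ ≤ ∑ j ∈ S, ∫ ω, (AdaSub.considerationTime (Z j) m ω : ℝ) ∂μ :=
        AdaSub.integral_finset_sup_le_sum S fun j hj => (hT j hj).1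
    _ ≤ ∑ _j ∈ S, B := Finset.sum_le_sum fun j hj => (hT j hj).2
    _ = S.card * B := by rw [Finset.sum_const, nsmul_eq_mul]

/-- Under the finite-sample PF property for all variables `j ∈ S*` (each
with AdaSub inclusion dynamics `P(Z_j^{(t+1)} = 1 | ℱ_t) = (q + Ki)/(p + Ki)` after `i`
considerations), the expected number of iterations until the thresholded model with
threshold `ρ` contains all of `S*` satisfies
`E[max_{j∈S*} T_j^{(i(ρ))}] ≤ s* · ∑_{i=0}^{i(ρ)-1} (p + Ki)/(q + Ki)`,
where `i(ρ) = ⌊(ρp − q)/(K(1−ρ)) + 1⌋` and `T_j^{(m)} = min{t : ∑_{l≤t} Z_j^{(l)} = m}`. -/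
theorem adaSub_threshold_expectation_bound {Ω : Type*} {m0 : MeasurableSpace Ω}
    (μ : Measure Ω) [IsProbabilityMeasure μ] (ℱ : Filtration ℕ m0)
    (q p K ρ : ℝ) (hq : 0 < q) (hqp : q < p) (hK : 0 < K) (hρ0 : 0 < ρ) (hρ1 : ρ < 1)
    {ι : Type*} (S : Finset ι) (Z : ι → ℕ → Ω → ℝ)
    (hZ01 : ∀ j ∈ S, ∀ t ω, Z j t ω = 0 ∨ Z j t ω = 1)
    (hZadapt : ∀ j ∈ S, ∀ t, Measurable[ℱ t] (Z j t))
    (hcond : ∀ j ∈ S, ∀ t : ℕ, (μ[Z j (t + 1) | ℱ t]) =ᵐ[μ] fun ω =>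
      (q + K * ∑ i ∈ Finset.Icc 1 t, Z j i ω) /
        (p + K * ∑ i ∈ Finset.Icc 1 t, Z j i ω)) :
    ∫ ω, ((S.sup fun j =>
        sInf {t : ℕ | ∑ l ∈ Finset.Icc 1 t, Z j l ω
          = ((⌊(ρ * p - q) / (K * (1 - ρ)) + 1⌋₊ : ℕ) : ℝ)} : ℕ) : ℝ) ∂μ
      ≤ (S.card : ℝ) *
          ∑ i ∈ Finset.range ⌊(ρ * p - q) / (K * (1 - ρ)) + 1⌋₊,
            (p + K * i) / (q + K * i) :=
  adaSub_threshold_expectation_bound_general μ ℱ q p K ρ hq hqp hK S Z hZ01 hZadapt hcond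
end

section
/- Let T_1,...,T_s be i.i.d. geometric random variables on ℕ with success probability θ ∈ (0,1). Then the expectation of their maximum satisfies |E[max_i T_i] − (1/2 + (1/log(1/(1−θ))) ∑_{i=1}^{s} 1/i)| ≤ 1/2. -/
open MeasureTheory ProbabilityTheory
open Real Set Filter Topology
open scoped ENNReal

/-! With `q = 1 - θ` and `λ = log (1 / q)`, the maximum `M` of the `T i` has tails
`P(M > k) = 1 - (1 - q ^ k) ^ s = g k`, where `g x = 1 - (1 - e^{-λx}) ^ s`, so `E[M] = ∑ₖ g k`.
As `g` is antitone on `[0, ∞)` with `g 0 ≤ 1`, the integral test traps this sum between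
`∫₀^∞ g` and `1 + ∫₀^∞ g`. Finally `1 - (1 - u) ^ s = ∑_{i<s} (1 - u) ^ i u` with `u = e^{-λx}`,
and `(1 - u) ^ i u` is the derivative of `(1 - u) ^ (i + 1) / (λ (i + 1))`, so
`∫₀^∞ g = λ⁻¹ ∑_{i<s} 1 / (i + 1)`. -/

section ExponentialIntegrals

variable {c : ℝ}

lemma one_sub_one_sub_pow_eq_sum {R : Type*} [CommRing R] (u : R) (s : ℕ) :
    1 - (1 - u) ^ s = ∑ i ∈ Finset.range s, (1 - u) ^ i * u := by
  have h := geom_sum_mul_neg (1 - u) s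
  rw [sub_sub_cancel] at h
  rw [← Finset.sum_mul, h]

lemma one_sub_exp_neg_mul_nonneg (hc : 0 ≤ c) {x : ℝ} (hx : 0 ≤ x) :
    0 ≤ 1 - exp (-(c * x)) :=
  sub_nonneg.2 (exp_le_one_iff.2 (neg_nonpos.2 (mul_nonneg hc hx)))

lemma hasDerivAt_one_sub_exp_neg_mul_pow_div (hc : c ≠ 0) (n : ℕ) (x : ℝ) :
    HasDerivAt (fun x => (1 - exp (-(c * x))) ^ (n + 1) / (c * (n + 1)))
      ((1 - exp (-(c * x))) ^ n * exp (-(c * x))) x := by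
  have hexp : HasDerivAt (fun x => exp (-(c * x))) (exp (-(c * x)) * -c) x := by
    simpa using ((hasDerivAt_id x).const_mul c).neg.exp
  refine (((hexp.const_sub 1).fun_pow (n + 1)).div_const (c * (n + 1))).congr_deriv ?_
  push_cast
  field_simp

lemma tendsto_one_sub_exp_neg_mul_pow_div (hc : 0 < c) (n : ℕ) :
    Tendsto (fun x => (1 - exp (-(c * x))) ^ (n + 1) / (c * (n + 1))) atTop
      (𝓝 (1 / (c * (n + 1)))) := by
  have hexp : Tendsto (fun x => exp (-(c * x))) atTop (𝓝 0) :=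
    tendsto_exp_atBot.comp (tendsto_neg_atTop_atBot.comp (tendsto_id.const_mul_atTop hc))
  convert ((tendsto_const_nhds (x := (1 : ℝ)).sub hexp).pow (n + 1)).div_const (c * (n + 1))
    using 2
  simp

lemma integrableOn_Ioi_one_sub_exp_neg_mul_pow_mul_exp (hc : 0 < c) (n : ℕ) :
    IntegrableOn (fun x => (1 - exp (-(c * x))) ^ n * exp (-(c * x))) (Ioi 0) :=
  integrableOn_Ioi_deriv_of_nonneg'
    (fun x _ => hasDerivAt_one_sub_exp_neg_mul_pow_div hc.ne' n x)
    (fun _ hx => mul_nonneg (pow_nonneg (one_sub_exp_neg_mul_nonneg hc.le (le_of_lt hx)) n)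
      (exp_pos _).le)
    (tendsto_one_sub_exp_neg_mul_pow_div hc n)

lemma integral_Ioi_one_sub_exp_neg_mul_pow_mul_exp (hc : 0 < c) (n : ℕ) :
    ∫ x in Ioi 0, (1 - exp (-(c * x))) ^ n * exp (-(c * x)) = 1 / (c * (n + 1)) := by
  rw [integral_Ioi_of_hasDerivAt_of_nonneg'
    (fun x _ => hasDerivAt_one_sub_exp_neg_mul_pow_div hc.ne' n x)
    (fun x hx => mul_nonneg (pow_nonneg (one_sub_exp_neg_mul_nonneg hc.le (le_of_lt hx)) n)
      (exp_pos _).le)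
    (tendsto_one_sub_exp_neg_mul_pow_div hc n)]
  simp

lemma integrableOn_Ioi_one_sub_one_sub_exp_neg_mul_pow (hc : 0 < c) (s : ℕ) :
    IntegrableOn (fun x => 1 - (1 - exp (-(c * x))) ^ s) (Ioi 0) := by
  simp_rw [one_sub_one_sub_pow_eq_sum]
  exact integrable_finsetSum _ fun n _ => integrableOn_Ioi_one_sub_exp_neg_mul_pow_mul_exp hc n

lemma integral_Ioi_one_sub_one_sub_exp_neg_mul_pow (hc : 0 < c) (s : ℕ) :
    ∫ x in Ioi 0, (1 - (1 - exp (-(c * x))) ^ s)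
      = 1 / c * ∑ i ∈ Finset.range s, 1 / ((i : ℝ) + 1) := by
  simp_rw [one_sub_one_sub_pow_eq_sum]
  rw [integral_finsetSum _ fun n _ => integrableOn_Ioi_one_sub_exp_neg_mul_pow_mul_exp hc n,
    Finset.mul_sum]
  refine Finset.sum_congr rfl fun n _ => ?_
  rw [integral_Ioi_one_sub_exp_neg_mul_pow_mul_exp hc n]
  field_simp

lemma antitoneOn_one_sub_one_sub_exp_neg_mul_pow (hc : 0 ≤ c) (s : ℕ) :
    AntitoneOn (fun x => 1 - (1 - exp (-(c * x))) ^ s) (Ici 0) := by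
  intro x hx y _ hxy
  have hexp : exp (-(c * y)) ≤ exp (-(c * x)) := exp_le_exp.2 (by nlinarith)
  have := pow_le_pow_left₀ (one_sub_exp_neg_mul_nonneg hc hx) (sub_le_sub_left hexp 1) s
  simp only
  linarith

lemma one_sub_one_sub_exp_neg_mul_pow_nonneg (hc : 0 ≤ c) (s : ℕ) {x : ℝ} (hx : 0 ≤ x) :
    0 ≤ 1 - (1 - exp (-(c * x))) ^ s :=
  sub_nonneg.2 <| pow_le_one₀ (one_sub_exp_neg_mul_nonneg hc hx) <|
    sub_le_self 1 (exp_pos _).le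

end ExponentialIntegrals

section Probability

variable {Ω : Type*} {m0 : MeasurableSpace Ω} {μ : Measure Ω}

lemma measure_lt_of_geometric {T : Ω → ℕ} (hT : Measurable T) {θ : ℝ} (hθ0 : 0 < θ)
    (hθ1 : θ ≤ 1)
    (hgeom : ∀ k : ℕ, 1 ≤ k → μ {ω | T ω = k} = ENNReal.ofReal (θ * (1 - θ) ^ (k - 1)))
    (k : ℕ) : μ {ω | k < T ω} = ENNReal.ofReal ((1 - θ) ^ k) := by
  have hq0 : 0 ≤ 1 - θ := by linarith
  have hunion : {ω | k < T ω} = ⋃ j : ℕ, {ω | T ω = k + j + 1} := by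
    ext ω
    simp only [mem_ofPred_eq, mem_iUnion]
    exact ⟨fun h => ⟨T ω - k - 1, by omega⟩, fun ⟨j, hj⟩ => by omega⟩
  have hdisj : Pairwise (Function.onFun Disjoint fun j : ℕ => {ω | T ω = k + j + 1}) :=
    fun i j hij => disjoint_left.2 fun ω hi hj => hij (by simp_all)
  rw [hunion, measure_iUnion hdisj fun j => hT (measurableSet_singleton _)]
  simp_rw [hgeom _ (Nat.le_add_left 1 _), Nat.add_sub_cancel, pow_add, ← mul_assoc]
  rw [← ENNReal.ofReal_tsum_of_nonneg (fun j => by positivity)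
      ((summable_geometric_of_lt_one hq0 (by linarith)).mul_left (θ * (1 - θ) ^ k)),
    tsum_mul_left, tsum_geometric_of_lt_one hq0 (by linarith), sub_sub_cancel]
  congr 1
  field_simp

lemma measure_lt_sup_of_iIndepFun [IsProbabilityMeasure μ] {ι : Type*} [Fintype ι]
    {T : ι → Ω → ℕ} (hT : ∀ i, Measurable (T i)) (hindep : iIndepFun T μ) {p : ℝ}
    (hp0 : 0 ≤ p) (hp1 : p ≤ 1) {k : ℕ} (htail : ∀ i, μ {ω | k < T i ω} = ENNReal.ofReal p) :
    μ {ω | k < Finset.univ.sup fun i => T i ω}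
      = ENNReal.ofReal (1 - (1 - p) ^ Fintype.card ι) := by
  have hle : ∀ i, μ (T i ⁻¹' Iic k) = ENNReal.ofReal (1 - p) := fun i => by
    have hc : T i ⁻¹' Iic k = {ω | k < T i ω}ᶜ := by ext ω; simp
    rw [hc, prob_compl_eq_one_sub (measurableSet_lt measurable_const (hT i)), htail,
      ← ENNReal.ofReal_one, ← ENNReal.ofReal_sub _ hp0]
  have hsup : {ω | k < Finset.univ.sup fun i => T i ω} = (⋂ i, T i ⁻¹' Iic k)ᶜ := by
    ext ω; simp
  rw [hsup, prob_compl_eq_one_sub (MeasurableSet.iInter fun i => hT i measurableSet_Iic),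
    hindep.meas_iInter fun i => ⟨Iic k, measurableSet_Iic, rfl⟩]
  simp_rw [hle, Finset.prod_const, Finset.card_univ]
  rw [← ENNReal.ofReal_pow (by linarith), ← ENNReal.ofReal_one,
    ← ENNReal.ofReal_sub _ (pow_nonneg (by linarith) _)]

lemma lintegral_natCast_eq_tsum_measure_lt {M : Ω → ℕ} (hM : Measurable M) :
    ∫⁻ ω, (M ω : ℝ≥0∞) ∂μ = ∑' k : ℕ, μ {ω | k < M ω} := by
  have hset : ∀ k : ℕ, MeasurableSet {ω | k < M ω} := fun k =>
    measurableSet_lt measurable_const hM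
  have hcount : ∀ ω, (M ω : ℝ≥0∞) = ∑' k : ℕ, {ω | k < M ω}.indicator 1 ω := fun ω => by
    rw [tsum_eq_sum (s := Finset.range (M ω)) fun k hk => by simpa using hk]
    simp [Set.indicator_apply, Finset.filter_true_of_mem fun _ => Finset.mem_range.1]
  rw [lintegral_congr hcount,
    lintegral_tsum fun k => (measurable_one.indicator (hset k)).aemeasurable]
  exact tsum_congr fun k => lintegral_indicator_one (hset k)

lemma integral_natCast_eq_tsum_of_measure_lt {M : Ω → ℕ} (hM : Measurable M) {a : ℕ → ℝ}
    (ha0 : ∀ k, 0 ≤ a k) (ha : Summable a)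
    (htail : ∀ k : ℕ, μ {ω | k < M ω} = ENNReal.ofReal (a k)) :
    ∫ ω, (M ω : ℝ) ∂μ = ∑' k, a k := by
  rw [integral_eq_lintegral_of_nonneg_ae (ae_of_all μ fun ω => Nat.cast_nonneg _)
      (measurable_from_nat.comp hM).aestronglyMeasurable]
  simp_rw [ENNReal.ofReal_natCast]
  rw [lintegral_natCast_eq_tsum_measure_lt hM, tsum_congr htail,
    ← ENNReal.ofReal_tsum_of_nonneg ha0 ha, ENNReal.toReal_ofReal (tsum_nonneg ha0)]

lemma measurable_finset_sup {ι α : Type*} [MeasurableSpace α] [SemilatticeSup α] [OrderBot α]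
    [MeasurableSup₂ α] {s : Finset ι} {f : ι → Ω → α} (hf : ∀ i ∈ s, Measurable (f i)) :
    Measurable fun ω => s.sup fun i => f i ω := by
  convert Finset.sup_induction (p := Measurable) measurable_const (fun _ hf _ hg => hf.sup hg) hf
    using 1
  ext ω
  rw [Finset.sup_apply]

end Probability

theorem expected_max_geometric_eisenberg_general {Ω : Type*} {m0 : MeasurableSpace Ω}
    (μ : Measure Ω) [IsProbabilityMeasure μ]
    (s : ℕ) (θ : ℝ) (hθ0 : 0 < θ) (hθ1 : θ < 1)
    (T : Fin s → Ω → ℕ)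
    (hmeas : ∀ i, Measurable (T i))
    (hindep : iIndepFun T μ)
    (hgeom : ∀ i, ∀ k : ℕ, 1 ≤ k →
      μ {ω | T i ω = k} = ENNReal.ofReal (θ * (1 - θ) ^ (k - 1))) :
    |(∫ ω, ((Finset.univ.sup fun i => T i ω : ℕ) : ℝ) ∂μ) -
        (1 / 2 + (1 / Real.log (1 / (1 - θ))) *
          ∑ i ∈ Finset.range s, 1 / ((i : ℝ) + 1))| ≤ 1 / 2 := by
  set L := Real.log (1 / (1 - θ))
  have hL : 0 < L := Real.log_pos (by rw [one_div, one_lt_inv₀] <;> linarith)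
  have hpow : ∀ k : ℕ, (1 - θ) ^ k = exp (-(L * k)) := fun k => by
    rw [show -(L * k) = k * Real.log (1 - θ) by simp [L]; ring, exp_nat_mul,
      exp_log (by linarith)]
  set g : ℝ → ℝ := fun x => 1 - (1 - exp (-(L * x))) ^ s
  have hanti : AntitoneOn g (Ici 0) := antitoneOn_one_sub_one_sub_exp_neg_mul_pow hL.le s
  have hnonneg : ∀ x ∈ Ioi (0 : ℝ), 0 ≤ g x := fun x hx =>
    one_sub_one_sub_exp_neg_mul_pow_nonneg hL.le s (le_of_lt hx)
  have hint : IntegrableOn g (Ioi 0) := integrableOn_Ioi_one_sub_one_sub_exp_neg_mul_pow hL s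
  have hsum : Summable fun k : ℕ => g k := hanti.summable_of_integrableOn_Ioi_zero hint hnonneg
  have hmean : ∫ ω, ((Finset.univ.sup fun i => T i ω : ℕ) : ℝ) ∂μ = ∑' k : ℕ, g k := by
    refine integral_natCast_eq_tsum_of_measure_lt (measurable_finset_sup fun i _ => hmeas i)
      (fun k => one_sub_one_sub_exp_neg_mul_pow_nonneg hL.le s k.cast_nonneg) hsum fun k => ?_
    rw [measure_lt_sup_of_iIndepFun hmeas hindep (by positivity)
      (pow_le_one₀ (by linarith) (by linarith))
      fun i => measure_lt_of_geometric (hmeas i) hθ0 hθ1.le (hgeom i) k, hpow, Fintype.card_fin]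
  have hg0 : g 0 ≤ 1 := sub_le_self _ (pow_nonneg (one_sub_exp_neg_mul_nonneg hL.le le_rfl) s)
  have lower := hanti.integral_le_tsum hsum hnonneg
  have upper := hanti.tsum_le_integral hint hnonneg
  rw [integral_Ioi_one_sub_one_sub_exp_neg_mul_pow hL s] at lower upper
  rw [hmean, abs_le]
  constructor <;> linarith

/-- Eisenberg, 2008: Let `T_1, …, T_s` be i.i.d. geometric random
variables on `ℕ = {1,2,…}` with success probability `θ ∈ (0,1)`, i.e.
`P(T_i = k) = θ(1−θ)^{k−1}`. Then
`|E[max_i T_i] − (1/2 + (1/log(1/(1−θ))) ∑_{i=1}^s 1/i)| ≤ 1/2`. -/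
theorem expected_max_geometric_eisenberg {Ω : Type*} {m0 : MeasurableSpace Ω}
    (μ : Measure Ω) [IsProbabilityMeasure μ]
    (s : ℕ) (hs : 0 < s) (θ : ℝ) (hθ0 : 0 < θ) (hθ1 : θ < 1)
    (T : Fin s → Ω → ℕ)
    (hmeas : ∀ i, Measurable (T i))
    (hindep : iIndepFun T μ)
    (hgeom : ∀ i, ∀ k : ℕ, 1 ≤ k →
      μ {ω | T i ω = k} = ENNReal.ofReal (θ * (1 - θ) ^ (k - 1))) :
    |(∫ ω, ((Finset.univ.sup fun i => T i ω : ℕ) : ℝ) ∂μ) -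
        (1 / 2 + (1 / Real.log (1 / (1 - θ))) *
          ∑ i ∈ Finset.range s, 1 / ((i : ℝ) + 1))| ≤ 1 / 2 :=
  expected_max_geometric_eisenberg_general (m0 := m0) μ s θ hθ0 hθ1 T hmeas hindep hgeom
end
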